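/- arXiv:2110.06722 — 4 statements merged into one kernel-verified Lean document; each statement's English description precedes it below -/
import Mathlib

section
/- Let (X,w) ∈ N̄ = N × kⁿ be an enhanced nilpotent element. Then the centralizer Ḡ_{(X,w)} = {(g,v) ∈ GLₙ(k) × kⁿ : gX = Xg and gw − Xv = w}, regarded as a subset of the affine space Matₙ(k) × kⁿ, is irreducible; equivalently, its vanishing ideal in the polynomial ring of coordinate functions on Matₙ(k) × kⁿ is a prime ideal. -/
open Matrix MvPolynomial

/-- The vanishing ideal of a nonempty, line-closed subset of affine space over an
infinite field is prime. -/
theorem vanishingIdeal_isPrime_of_lineClosed {k : Type*} [Field k] [Infinite k]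
    {σ : Type*} (S : Set (σ → k)) (hne : S.Nonempty)
    (hline : ∀ a ∈ S, ∀ b ∈ S, ∀ t : k, (fun i => a i + t * (b i - a i)) ∈ S) :
    (MvPolynomial.vanishingIdeal k S).IsPrime := by
  constructor
  · intro h
    obtain ⟨x, hx⟩ := hne
    have := (MvPolynomial.mem_vanishingIdeal_iff.mp (h ▸ Submodule.mem_top :
      (1 : MvPolynomial σ k) ∈ MvPolynomial.vanishingIdeal k S)) x hx
    simp at this
  · intro f g hfg
    by_contra hcon
    push_neg at hcon
    obtain ⟨hf, hg⟩ := hcon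
    rw [MvPolynomial.mem_vanishingIdeal_iff] at hf hg
    push_neg at hf hg
    obtain ⟨a, ha, hfa⟩ := hf
    obtain ⟨b, hb, hgb⟩ := hg
    set σmap : σ → Polynomial k :=
      fun i => Polynomial.C (a i) + Polynomial.C (b i - a i) * Polynomial.X with hσmap
    have key : ∀ (h : MvPolynomial σ k) (t : k),
        Polynomial.eval t (MvPolynomial.aeval σmap h) =
          MvPolynomial.eval (fun i => a i + t * (b i - a i)) h := by
      intro h t
      have h2 := MvPolynomial.comp_aeval_apply (f := σmap) (Polynomial.aeval t) h
      have h1 : (fun i => Polynomial.aeval t (σmap i)) = fun i => a i + t * (b i - a i) := by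
        funext i; simp [hσmap, mul_comm]
      rw [h1] at h2
      rw [← Polynomial.coe_aeval_eq_eval, h2]
      rw [MvPolynomial.aeval_def, Algebra.algebraMap_self]; rfl
    have hPQ : (MvPolynomial.aeval σmap f) * (MvPolynomial.aeval σmap g) = 0 := by
      rw [← _root_.map_mul]
      apply Polynomial.zero_of_eval_zero
      intro t
      rw [key]
      exact MvPolynomial.mem_vanishingIdeal_iff.mp hfg _ (hline a ha b hb t)
    rcases mul_eq_zero.mp hPQ with h0 | h0
    · apply hfa
      have := key f 0
      rw [h0] at this
      simpa using this.symm
    · apply hgb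
      have := key g 1
      rw [h0] at this
      simpa using this.symm

/-- The coordinates of a point of the affine space `Matₙ(k) × kⁿ`. -/
def pairCoords {k : Type*} [CommRing k] {n : ℕ}
    (p : Matrix (Fin n) (Fin n) k × (Fin n → k)) : (Fin n × Fin n) ⊕ Fin n → k :=
  Sum.elim (fun ij => p.1 ij.1 ij.2) p.2

/-- The centralizer of `(X, w)` in the enhanced group `Ḡ = GLₙ(k) ⋉ kⁿ`, regarded as a
subset of the affine space `Matₙ(k) × kⁿ`:  pairs `(g, v)` with `g` invertible,
`gX = Xg` and `gw − Xv = w`. -/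
def enhCentralizer {k : Type*} [Field k] {n : ℕ}
    (X : Matrix (Fin n) (Fin n) k) (w : Fin n → k) :
    Set (Matrix (Fin n) (Fin n) k × (Fin n → k)) :=
  { p | IsUnit p.1 ∧ p.1 * X = X * p.1 ∧ p.1 *ᵥ w - X *ᵥ p.2 = w }

/-- For an enhanced nilpotent element `(X, w) ∈ N̄ = N × kⁿ`, the
vanishing ideal of the centralizer `Ḡ_{(X,w)} ⊆ Matₙ(k) × kⁿ` is a prime ideal;
equivalently, the centralizer is an irreducible subset of the affine space. -/
theorem enhCentralizer_vanishingIdeal_isPrime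
    {k : Type*} [Field k] [IsAlgClosed k] {n : ℕ} (hn : 1 ≤ n)
    (X : Matrix (Fin n) (Fin n) k) (hX : IsNilpotent X) (w : Fin n → k) :
    (MvPolynomial.vanishingIdeal k (pairCoords '' enhCentralizer X w)).IsPrime := by
  classical
  -- the "closure": drop the invertibility condition
  set T : Set (Matrix (Fin n) (Fin n) k × (Fin n → k)) :=
    { p | p.1 * X = X * p.1 ∧ p.1 *ᵥ w - X *ᵥ p.2 = w } with hT
  have hone : ((1 : Matrix (Fin n) (Fin n) k), (0 : Fin n → k)) ∈ T := by
    constructor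
    · simp
    · simp [Matrix.one_mulVec, Matrix.mulVec_zero]
  -- T is closed under affine lines
  have hline : ∀ a ∈ pairCoords '' T, ∀ b ∈ pairCoords '' T, ∀ t : k,
      (fun i => a i + t * (b i - a i)) ∈ pairCoords '' T := by
    rintro a ⟨p, hp, rfl⟩ b ⟨q, hq, rfl⟩ t
    refine ⟨p + t • (q - p), ⟨?_, ?_⟩, ?_⟩
    · show (p.1 + t • (q.1 - p.1)) * X = X * (p.1 + t • (q.1 - p.1))
      rw [add_mul, mul_add, Matrix.smul_mul, Matrix.mul_smul, sub_mul, mul_sub,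
        hp.1, hq.1]
    · show (p.1 + t • (q.1 - p.1)) *ᵥ w - X *ᵥ (p.2 + t • (q.2 - p.2)) = w
      have key : (p.1 + t • (q.1 - p.1)) *ᵥ w - X *ᵥ (p.2 + t • (q.2 - p.2))
          = (p.1 *ᵥ w - X *ᵥ p.2) + t • ((q.1 *ᵥ w - X *ᵥ q.2) - (p.1 *ᵥ w - X *ᵥ p.2)) := by
        rw [Matrix.add_mulVec, Matrix.smul_mulVec, Matrix.sub_mulVec,
          Matrix.mulVec_add, Matrix.mulVec_smul, Matrix.mulVec_sub]
        module
      rw [key, hp.2, hq.2]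
      simp
    · funext i
      rcases i with ij | i
      · show (p.1 + t • (q.1 - p.1)) ij.1 ij.2 = _
        simp [pairCoords, Matrix.add_apply, Matrix.smul_apply, Matrix.sub_apply,
          smul_eq_mul]
      · show (p.2 + t • (q.2 - p.2)) i = _
        simp [pairCoords, Pi.add_apply, Pi.smul_apply, Pi.sub_apply, smul_eq_mul]
  have hTprime : (MvPolynomial.vanishingIdeal k (pairCoords '' T)).IsPrime :=
    vanishingIdeal_isPrime_of_lineClosed _ ⟨pairCoords (1, 0), ⟨(1, 0), hone, rfl⟩⟩ hline
  -- the determinant polynomial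
  set D : MvPolynomial ((Fin n × Fin n) ⊕ Fin n) k :=
    (Matrix.of fun i j : Fin n =>
      (MvPolynomial.X (Sum.inl (i, j)) : MvPolynomial ((Fin n × Fin n) ⊕ Fin n) k)).det
    with hDdef
  have hD : ∀ p : Matrix (Fin n) (Fin n) k × (Fin n → k),
      MvPolynomial.eval (pairCoords p) D = p.1.det := by
    intro p
    rw [hDdef, ← RingHom.coe_coe (MvPolynomial.eval (pairCoords p)),
      RingHom.map_det]
    congr 1
    ext i j
    simp [pairCoords]
  have heq : MvPolynomial.vanishingIdeal k (pairCoords '' enhCentralizer X w)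
      = MvPolynomial.vanishingIdeal k (pairCoords '' T) := by
    apply le_antisymm
    · -- via the determinant trick
      intro f hf
      have hfD : f * D ∈ MvPolynomial.vanishingIdeal k (pairCoords '' T) := by
        rw [MvPolynomial.mem_vanishingIdeal_iff]
        rintro x ⟨p, hp, rfl⟩
        rw [_root_.map_mul, MvPolynomial.aeval_eq_eval, hD]
        by_cases hu : IsUnit p.1
        · have : p ∈ enhCentralizer X w := ⟨hu, hp.1, hp.2⟩
          rw [← MvPolynomial.aeval_eq_eval, MvPolynomial.mem_vanishingIdeal_iff.mp hf _ ⟨p, this, rfl⟩, zero_mul]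
        · have : p.1.det = 0 := by
            by_contra hdet
            exact hu ((Matrix.isUnit_iff_isUnit_det p.1).mpr (isUnit_iff_ne_zero.mpr hdet))
          rw [this, mul_zero]
      have hDnot : D ∉ MvPolynomial.vanishingIdeal k (pairCoords '' T) := by
        intro hmem
        have := MvPolynomial.mem_vanishingIdeal_iff.mp hmem _ ⟨(1, 0), hone, rfl⟩
        rw [MvPolynomial.aeval_eq_eval, hD] at this
        simp at this
      rcases hTprime.mem_or_mem hfD with h | h
      · exact h
      · exact absurd h hDnot
    · -- smaller set, larger ideal
      intro f hf
      rw [MvPolynomial.mem_vanishingIdeal_iff] at hf ⊢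
      rintro x ⟨p, hp, rfl⟩
      exact hf _ ⟨p, ⟨hp.2.1, hp.2.2⟩, rfl⟩
  rw [heq]
  exact hTprime
end

section
/- Let λ ≠ (1ⁿ) be a partition of n, so that J = J_λ ≠ 0, and let r be the number of distinct parts of λ. The centralizer G_J = {g ∈ GLₙ(k) : gJ = Jg} acts linearly on the quotient space kⁿ/im(J), and this action has exactly r+1 orbits, namely the orbits of the images of u₁, …, u_r and of 0. -/
open Matrix MvPolynomial

structure JordanData (k : Type*) [Field k] (n : ℕ) where
  t : ℕ
  a : ℕ → ℕ
  anti : Antitone a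
  pos_iff : ∀ i, a i ≠ 0 ↔ i < t
  sum_eq : ∑ i ∈ Finset.range t, a i = n
  X : Matrix (Fin n) (Fin n) k
  v : ℕ → Fin n → k
  kill : ∀ i < t, (X ^ a i) *ᵥ v i = 0
  basis_indep : LinearIndependent k
    (fun p : Σ i : Fin t, Fin (a i.val) => (X ^ p.2.val) *ᵥ v p.1.val)
  basis_span : Submodule.span k
    (Set.range (fun p : Σ i : Fin t, Fin (a i.val) => (X ^ p.2.val) *ᵥ v p.1.val)) = ⊤

namespace JordanData

variable {k : Type*} [Field k] {n : ℕ} (D : JordanData k n)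

noncomputable def B : Module.Basis (Σ i : Fin D.t, Fin (D.a i.val)) k (Fin n → k) :=
  Module.Basis.mk D.basis_indep D.basis_span.ge

lemma apos (i : Fin D.t) : 0 < D.a i.val :=
  Nat.pos_of_ne_zero ((D.pos_iff i.val).mpr i.isLt)

def idx (i : Fin D.t) : Σ i : Fin D.t, Fin (D.a i.val) := ⟨i, ⟨0, D.apos i⟩⟩

lemma idx_injective : Function.Injective D.idx := fun i j h => congrArg Sigma.fst h

lemma B_apply (p : Σ i : Fin D.t, Fin (D.a i.val)) :
    D.B p = (D.X ^ p.2.val) *ᵥ D.v p.1.val := by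
  simp [B, Module.Basis.mk_apply]

lemma B_idx (i : Fin D.t) : D.B (D.idx i) = D.v i.val := by
  simp [B_apply, idx]

lemma kill' (i : Fin D.t) : (D.X ^ D.a i.val) *ᵥ D.v i.val = 0 := D.kill i.val i.isLt

lemma Xpow_vmul (i : Fin D.t) (e : ℕ) (h : D.a i.val ≤ e) :
    (D.X ^ e) *ᵥ D.v i.val = 0 := by
  have he : D.X ^ e = D.X ^ (e - D.a i.val) * D.X ^ D.a i.val := by
    rw [← pow_add]; congr 1; omega
  rw [he, ← mulVec_mulVec, D.kill' i, mulVec_zero]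

lemma Xpow_B (e : ℕ) (p : Σ i : Fin D.t, Fin (D.a i.val)) :
    (D.X ^ e) *ᵥ D.B p =
      if h : p.2.val + e < D.a p.1.val then D.B ⟨p.1, ⟨p.2.val + e, h⟩⟩ else 0 := by
  rw [B_apply, mulVec_mulVec, ← pow_add]
  split_ifs with h
  · rw [B_apply]
    simp only [add_comm]
  · exact D.Xpow_vmul p.1 _ (by omega)

lemma coord_B (p q : Σ i : Fin D.t, Fin (D.a i.val)) :
    D.B.coord q (D.B p) = if p = q then 1 else 0 := by
  rw [Module.Basis.coord_apply, Module.Basis.repr_self, Finsupp.single_apply]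

lemma sigma_eq_iff {i i' : Fin D.t} {j : Fin (D.a i.val)} {j' : Fin (D.a i'.val)} :
    (⟨i, j⟩ : Σ i : Fin D.t, Fin (D.a i.val)) = ⟨i', j'⟩ ↔ i = i' ∧ j.val = j'.val := by
  constructor
  · rintro h
    cases h
    exact ⟨rfl, rfl⟩
  · rintro ⟨rfl, h⟩
    rw [Fin.ext h]


lemma eq_idx_iff {i i' : Fin D.t} {j : Fin (D.a i.val)} :
    (⟨i, j⟩ : Σ i : Fin D.t, Fin (D.a i.val)) = D.idx i' ↔ i = i' ∧ j.val = 0 :=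
  sigma_eq_iff D

lemma repr_Xpow (e : ℕ) (i' : Fin D.t) (he : e < D.a i'.val) (u : Fin n → k) :
    D.B.repr ((D.X ^ e) *ᵥ u) ⟨i', ⟨e, he⟩⟩ = D.B.repr u (D.idx i') := by
  have key : (D.B.coord ⟨i', ⟨e, he⟩⟩).comp (D.X ^ e).mulVecLin = D.B.coord (D.idx i') := by
    apply D.B.ext
    rintro ⟨i, j⟩
    simp only [LinearMap.comp_apply, mulVecLin_apply]
    rw [Xpow_B]
    by_cases h : j.val + e < D.a i.val
    · rw [dif_pos h, coord_B, coord_B]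
      have hiff : ((⟨i, ⟨j.val + e, h⟩⟩ : Σ i : Fin D.t, Fin (D.a i.val)) = ⟨i', ⟨e, he⟩⟩)
          ↔ ((⟨i, j⟩ : Σ i : Fin D.t, Fin (D.a i.val)) = D.idx i') := by
        rw [sigma_eq_iff, eq_idx_iff]
        simp only [Fin.val_mk]
        constructor <;> rintro ⟨rfl, h2⟩ <;> exact ⟨rfl, by omega⟩
      simp only [hiff]
    · have hne : ¬((⟨i, j⟩ : Σ i : Fin D.t, Fin (D.a i.val)) = D.idx i') := by
        intro hp
        rw [eq_idx_iff] at hp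
        obtain ⟨rfl, h0⟩ := hp
        omega
      rw [dif_neg h, map_zero, coord_B, if_neg hne]
  have := LinearMap.congr_fun key u
  simpa using this

lemma repr_X_zero (i' : Fin D.t) (z : Fin n → k) :
    D.B.repr (D.X *ᵥ z) (D.idx i') = 0 := by
  have key : (D.B.coord (D.idx i')).comp D.X.mulVecLin = 0 := by
    apply D.B.ext
    intro p
    simp only [LinearMap.comp_apply, mulVecLin_apply, LinearMap.zero_apply]
    have h1 : D.X *ᵥ D.B p = (D.X ^ 1) *ᵥ D.B p := by rw [pow_one]
    rw [h1, Xpow_B]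
    split_ifs with h
    · rw [coord_B, if_neg]
      intro hp
      rw [eq_idx_iff] at hp
      obtain ⟨rfl, h0⟩ := hp
      simp only [Fin.val_mk] at h0
      omega
    · simp
  have := LinearMap.congr_fun key z
  simpa using this

lemma repr_eq_of_sub_mem (x z : Fin n → k)
    (h : x - z ∈ LinearMap.range D.X.mulVecLin) (i' : Fin D.t) :
    D.B.repr x (D.idx i') = D.B.repr z (D.idx i') := by
  obtain ⟨u, hu⟩ := h
  have hx : x = z + D.X *ᵥ u := by
    rw [mulVecLin_apply] at hu
    rw [hu]; abel
  rw [hx, map_add, Finsupp.add_apply, repr_X_zero, add_zero]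

lemma mem_range_of_repr_idx_zero (x : Fin n → k)
    (h0 : ∀ i : Fin D.t, D.B.repr x (D.idx i) = 0) :
    x ∈ LinearMap.range D.X.mulVecLin := by
  have hx := D.B.sum_repr x
  rw [← hx]
  apply Submodule.sum_mem
  rintro ⟨i, j⟩ -
  by_cases hj : j.val = 0
  · have hp : (⟨i, j⟩ : Σ i : Fin D.t, Fin (D.a i.val)) = D.idx i := by
      rw [sigma_eq_iff]; exact ⟨rfl, hj⟩
    rw [hp, h0, zero_smul]
    exact zero_mem _
  · apply Submodule.smul_mem
    refine ⟨(D.X ^ (j.val - 1)) *ᵥ D.v i.val, ?_⟩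
    rw [mulVecLin_apply, B_apply, mulVec_mulVec, ← pow_succ',
      Nat.sub_add_cancel (Nat.one_le_iff_ne_zero.mpr hj)]

lemma repr_sum_v (c : Fin D.t → k) (i' : Fin D.t) :
    D.B.repr (∑ i, c i • D.v i.val) (D.idx i') = c i' := by
  have hz : (∑ i, c i • D.v i.val) = ∑ i, c i • D.B (D.idx i) := by
    simp [B_idx]
  rw [hz, map_sum, Finset.sum_apply']
  simp only [_root_.map_smul, Finsupp.smul_apply, Module.Basis.repr_self, Finsupp.single_apply]
  have hiff : ∀ i : Fin D.t, (D.idx i = D.idx i') = (i = i') :=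
    fun i => propext ⟨fun h => D.idx_injective h, fun h => by rw [h]⟩
  simp only [hiff, smul_eq_mul, mul_ite, mul_one, mul_zero]
  rw [Finset.sum_ite_eq' Finset.univ i' c]
  simp

lemma repr_v (m i : Fin D.t) :
    D.B.repr (D.v m.val) (D.idx i) = if m = i then 1 else 0 := by
  rw [← B_idx, ← Module.Basis.coord_apply, coord_B]
  congr 1
  exact propext ⟨fun h => D.idx_injective h, fun h => by rw [h]⟩

noncomputable def Phi (w : Fin D.t → Fin n → k) : (Fin n → k) →ₗ[k] (Fin n → k) :=
  D.B.constr k (fun p => (D.X ^ p.2.val) *ᵥ w p.1)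

lemma Phi_B (w : Fin D.t → Fin n → k) (p : Σ i : Fin D.t, Fin (D.a i.val)) :
    D.Phi w (D.B p) = (D.X ^ p.2.val) *ᵥ w p.1 :=
  D.B.constr_basis k _ p

lemma Phi_v (w : Fin D.t → Fin n → k) (i : Fin D.t) :
    D.Phi w (D.v i.val) = w i := by
  rw [← B_idx, Phi_B]
  simp [idx]

/-- A family is *admissible* if it satisfies the kill conditions. -/
def KillFam (w : Fin D.t → Fin n → k) : Prop :=
  ∀ i : Fin D.t, (D.X ^ D.a i.val) *ᵥ w i = 0

lemma Phi_X (w : Fin D.t → Fin n → k) (hw : D.KillFam w) (u : Fin n → k) :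
    D.Phi w (D.X *ᵥ u) = D.X *ᵥ D.Phi w u := by
  have key : (D.Phi w).comp D.X.mulVecLin = D.X.mulVecLin.comp (D.Phi w) := by
    apply D.B.ext
    rintro ⟨i, j⟩
    simp only [LinearMap.comp_apply, mulVecLin_apply]
    have h1 : D.X *ᵥ D.B ⟨i, j⟩ = (D.X ^ 1) *ᵥ D.B ⟨i, j⟩ := by rw [pow_one]
    rw [h1, Xpow_B, Phi_B]
    by_cases h : j.val + 1 < D.a i.val
    · rw [dif_pos h, Phi_B]
      simp only [Fin.val_mk]
      rw [mulVec_mulVec, ← pow_succ']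
    · rw [dif_neg h, map_zero, mulVec_mulVec, ← pow_succ']
      have hj : j.val + 1 = D.a i.val := by omega
      rw [hj, hw i]
  simpa using LinearMap.congr_fun key u

lemma Phi_Xpow (w : Fin D.t → Fin n → k) (hw : D.KillFam w) (e : ℕ) (u : Fin n → k) :
    D.Phi w ((D.X ^ e) *ᵥ u) = (D.X ^ e) *ᵥ D.Phi w u := by
  induction e generalizing u with
  | zero => simp
  | succ e ih =>
    have h1 : D.X ^ (e + 1) = D.X ^ e * D.X := pow_succ _ _
    rw [h1, ← mulVec_mulVec, ih, D.Phi_X w hw, mulVec_mulVec]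

lemma Phi_Phi (w w' : Fin D.t → Fin n → k) (hw : D.KillFam w) (u : Fin n → k) :
    D.Phi w (D.Phi w' u) = D.Phi (fun i => D.Phi w (w' i)) u := by
  have key : (D.Phi w).comp (D.Phi w') = D.Phi (fun i => D.Phi w (w' i)) := by
    apply D.B.ext
    rintro p
    simp only [LinearMap.comp_apply]
    rw [Phi_B, Phi_B, D.Phi_Xpow w hw]
  exact LinearMap.congr_fun key u

lemma Phi_id (u : Fin n → k) : D.Phi (fun i => D.v i.val) u = u := by
  have key : D.Phi (fun i => D.v i.val) = LinearMap.id := by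
    apply D.B.ext
    rintro p
    rw [Phi_B, LinearMap.id_apply, B_apply]
  rw [key, LinearMap.id_apply]

/-- The matrix of `Phi w`. -/
noncomputable def M (w : Fin D.t → Fin n → k) : Matrix (Fin n) (Fin n) k :=
  LinearMap.toMatrix' (D.Phi w)

lemma M_mulVec (w : Fin D.t → Fin n → k) (x : Fin n → k) :
    D.M w *ᵥ x = D.Phi w x := by
  rw [← Matrix.toLin'_apply, M, Matrix.toLin'_toMatrix']

lemma M_comm (w : Fin D.t → Fin n → k) (hw : D.KillFam w) :
    D.M w * D.X = D.X * D.M w := by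
  apply Matrix.toLin'.injective
  apply LinearMap.ext
  intro u
  simp only [Matrix.toLin'_apply]
  rw [← mulVec_mulVec, ← mulVec_mulVec, M_mulVec, M_mulVec, D.Phi_X w hw]

lemma M_mul_eq_one (w w' : Fin D.t → Fin n → k) (hw : D.KillFam w)
    (hinv : ∀ i : Fin D.t, D.Phi w (w' i) = D.v i.val) :
    D.M w * D.M w' = 1 := by
  rw [M, M, ← LinearMap.toMatrix'_comp, ← LinearMap.toMatrix'_id (R := k) (n := Fin n)]
  congr 1
  apply LinearMap.ext
  intro u
  simp only [LinearMap.comp_apply, LinearMap.id_apply]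
  rw [D.Phi_Phi w w' hw]
  have hfun : (fun i : Fin D.t => D.Phi w (w' i)) = fun i : Fin D.t => D.v i.val :=
    funext hinv
  rw [hfun, D.Phi_id]

lemma inv_comm (g : (Matrix (Fin n) (Fin n) k)ˣ) (hg : g.val * D.X = D.X * g.val) :
    (g⁻¹).val * D.X = D.X * (g⁻¹).val := by
  calc (g⁻¹).val * D.X
      = (g⁻¹).val * D.X * (g.val * (g⁻¹).val) := by
        rw [Units.mul_inv, mul_one]
    _ = (g⁻¹).val * (D.X * g.val) * (g⁻¹).val := by simp only [mul_assoc]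
    _ = (g⁻¹).val * (g.val * D.X) * (g⁻¹).val := by rw [hg]
    _ = ((g⁻¹).val * g.val) * (D.X * (g⁻¹).val) := by simp only [mul_assoc]
    _ = D.X * (g⁻¹).val := by rw [Units.inv_mul, one_mul]

/-- Main invariance lemma: matrices commuting with `X` do not raise the level. -/
lemma level_bound (G : Matrix (Fin n) (Fin n) k) (hG : G * D.X = D.X * G)
    (x : Fin n → k) (β : ℕ)
    (hx : ∀ i : Fin D.t, D.B.repr x (D.idx i) ≠ 0 → D.a i.val ≤ β) :
    ∀ i : Fin D.t, D.B.repr (G *ᵥ x) (D.idx i) ≠ 0 → D.a i.val ≤ β := by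
  set c : Fin D.t → k := fun i => D.B.repr x (D.idx i) with hc
  set z : Fin n → k := ∑ i, c i • D.v i.val with hzdef
  have hrz : ∀ i : Fin D.t, D.B.repr z (D.idx i) = c i := fun i => D.repr_sum_v c i
  have hsub : x - z ∈ LinearMap.range D.X.mulVecLin := by
    apply D.mem_range_of_repr_idx_zero
    intro i
    rw [map_sub, Finsupp.sub_apply, hrz]
    simp [hc]
  have hXz : (D.X ^ β) *ᵥ z = 0 := by
    rw [← mulVecLin_apply, hzdef, map_sum]
    apply Finset.sum_eq_zero
    intro i _
    rw [_root_.map_smul, mulVecLin_apply]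
    by_cases hci : c i = 0
    · rw [hci, zero_smul]
    · rw [D.Xpow_vmul i β (hx i hci), smul_zero]
  have hcomm : G * D.X ^ β = D.X ^ β * G := (Commute.pow_right hG β).eq
  have hXGz : (D.X ^ β) *ᵥ (G *ᵥ z) = 0 := by
    rw [mulVec_mulVec, ← hcomm, ← mulVec_mulVec, hXz, mulVec_zero]
  have hGz : ∀ i : Fin D.t, D.B.repr (G *ᵥ z) (D.idx i) ≠ 0 → D.a i.val ≤ β := by
    intro i hi
    by_contra hlt
    push_neg at hlt
    have := D.repr_Xpow β i hlt (G *ᵥ z)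
    rw [hXGz] at this
    simp only [map_zero, Finsupp.coe_zero, Pi.zero_apply] at this
    exact hi this.symm
  intro i hi
  apply hGz i
  have hsub2 : G *ᵥ x - G *ᵥ z ∈ LinearMap.range D.X.mulVecLin := by
    obtain ⟨u, hu⟩ := hsub
    rw [mulVecLin_apply] at hu
    refine ⟨G *ᵥ u, ?_⟩
    rw [mulVecLin_apply, mulVec_mulVec, ← hG, ← mulVec_mulVec, hu, mulVec_sub]
  rw [← D.repr_eq_of_sub_mem _ _ hsub2 i]
  exact hi

lemma a_le_of_mk_eq (m m' : Fin D.t) (g g' : (Matrix (Fin n) (Fin n) k)ˣ)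
    (hg : g.val * D.X = D.X * g.val) (hg' : g'.val * D.X = D.X * g'.val)
    (h : (Submodule.Quotient.mk (g.val *ᵥ D.v m.val) :
        (Fin n → k) ⧸ LinearMap.range D.X.mulVecLin)
      = Submodule.Quotient.mk (g'.val *ᵥ D.v m'.val)) :
    D.a m'.val ≤ D.a m.val := by
  have h1 : ∀ i : Fin D.t,
      D.B.repr (g.val *ᵥ D.v m.val) (D.idx i) ≠ 0 → D.a i.val ≤ D.a m.val := by
    apply D.level_bound g.val hg
    intro i hi
    rw [repr_v] at hi
    by_cases him : m = i
    · rw [← him]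
    · rw [if_neg him] at hi
      exact absurd rfl hi
  have hsub : g.val *ᵥ D.v m.val - g'.val *ᵥ D.v m'.val ∈ LinearMap.range D.X.mulVecLin :=
    (Submodule.Quotient.eq _).mp h
  have h2 : ∀ i : Fin D.t,
      D.B.repr (g'.val *ᵥ D.v m'.val) (D.idx i) ≠ 0 → D.a i.val ≤ D.a m.val := by
    intro i hi
    rw [← D.repr_eq_of_sub_mem _ _ hsub i] at hi
    exact h1 i hi
  have h3 := D.level_bound (g'⁻¹).val (D.inv_comm g' hg') _ (D.a m.val) h2
  have hval : (g'⁻¹).val *ᵥ (g'.val *ᵥ D.v m'.val) = D.v m'.val := by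
    rw [mulVec_mulVec, Units.inv_mul, one_mulVec]
  rw [hval] at h3
  apply h3 m'
  rw [repr_v, if_pos rfl]
  exact one_ne_zero

lemma mk_vm_ne_zero (m : Fin D.t) (g : (Matrix (Fin n) (Fin n) k)ˣ)
    (hg : g.val * D.X = D.X * g.val)
    (h : (Submodule.Quotient.mk (g.val *ᵥ D.v m.val) :
        (Fin n → k) ⧸ LinearMap.range D.X.mulVecLin)
      = Submodule.Quotient.mk 0) : False := by
  have hsub : g.val *ᵥ D.v m.val - 0 ∈ LinearMap.range D.X.mulVecLin :=
    (Submodule.Quotient.eq _).mp h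
  have h2 : ∀ i : Fin D.t,
      D.B.repr (g.val *ᵥ D.v m.val) (D.idx i) ≠ 0 → D.a i.val ≤ 0 := by
    intro i hi
    exfalso
    apply hi
    have := D.repr_eq_of_sub_mem (g.val *ᵥ D.v m.val) 0 (by simpa using hsub) i
    simpa using this
  have h3 := D.level_bound (g⁻¹).val (D.inv_comm g hg) _ 0 h2
  have hval : (g⁻¹).val *ᵥ (g.val *ᵥ D.v m.val) = D.v m.val := by
    rw [mulVec_mulVec, Units.inv_mul, one_mulVec]
  rw [hval] at h3
  have h4 := h3 m (by rw [repr_v, if_pos rfl]; exact one_ne_zero)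
  have := D.apos m
  omega

lemma last_unique {m m' : Fin D.t} (h1 : D.a (m.val + 1) < D.a m.val)
    (h1' : D.a (m'.val + 1) < D.a m'.val) (he : D.a m.val = D.a m'.val) : m = m' := by
  rcases lt_trichotomy m.val m'.val with h | h | h
  · exfalso
    have := D.anti (show m.val + 1 ≤ m'.val by omega)
    omega
  · exact Fin.ext h
  · exfalso
    have := D.anti (show m'.val + 1 ≤ m.val by omega)
    omega

lemma exists_unit (c : Fin D.t → k) (hc : ∃ i, c i ≠ 0) :
    ∃ (m : Fin D.t) (g : (Matrix (Fin n) (Fin n) k)ˣ),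
      D.a (m.val + 1) < D.a m.val ∧
      g.val * D.X = D.X * g.val ∧
      g.val *ᵥ D.v m.val = ∑ i, c i • D.v i.val := by
  classical
  obtain ⟨i1, hi1⟩ := hc
  set s : Finset (Fin D.t) := Finset.univ.filter (fun i => c i ≠ 0) with hs
  have hsne : s.Nonempty := ⟨i1, by simp [hs, hi1]⟩
  set b : ℕ := (s.image (fun i => D.a i.val)).max' (hsne.image _) with hb
  have hble : ∀ i : Fin D.t, c i ≠ 0 → D.a i.val ≤ b := by
    intro i hi
    apply Finset.le_max'
    exact Finset.mem_image_of_mem _ (by simp [hs, hi])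
  obtain ⟨i₀, hi₀s, hi₀b⟩ :=
    Finset.mem_image.mp ((s.image (fun i => D.a i.val)).max'_mem (hsne.image _))
  have hc₀ : c i₀ ≠ 0 := by simpa [hs] using hi₀s
  have hib : D.a i₀.val = b := hi₀b.trans hb.symm
  set T : Finset (Fin D.t) := Finset.univ.filter (fun i => D.a i.val = b) with hT
  have hTne : T.Nonempty := ⟨i₀, by simp [hT, hib]⟩
  set m : Fin D.t := T.max' hTne with hm
  have ham : D.a m.val = b := by
    have := T.max'_mem hTne
    simpa [hT] using this
  have hmax : ∀ i : Fin D.t, D.a i.val = b → i ≤ m := fun i hi =>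
    T.le_max' i (by simp [hT, hi])
  have hbpos : 0 < b := hib ▸ D.apos i₀
  have hlast : D.a (m.val + 1) < D.a m.val := by
    by_cases hlt : m.val + 1 < D.t
    · have hle : D.a (m.val + 1) ≤ D.a m.val := D.anti (Nat.le_succ _)
      rcases lt_or_eq_of_le hle with h | h
      · exact h
      · exfalso
        have h2 : (⟨m.val + 1, hlt⟩ : Fin D.t) ≤ m :=
          hmax ⟨m.val + 1, hlt⟩ (by rw [← ham]; simpa using h)
        have h3 : m.val + 1 ≤ m.val := Fin.le_def.mp h2
        omega
    · have h0 : D.a (m.val + 1) = 0 := by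
        by_contra h0
        exact hlt ((D.pos_iff _).mp h0)
      rw [h0, ham]
      exact hbpos
  set σ : Equiv.Perm (Fin D.t) := Equiv.swap i₀ m with hσ
  have hσσ : ∀ i, σ (σ i) = i := fun i => Equiv.swap_apply_self i₀ m i
  have hσm : σ m = i₀ := Equiv.swap_apply_right i₀ m
  have hσi₀ : σ i₀ = m := Equiv.swap_apply_left i₀ m
  have haσ : ∀ i : Fin D.t, D.a (σ i).val = D.a i.val := by
    intro i
    rcases eq_or_ne i i₀ with rfl | h1
    · rw [hσi₀, ham, hib]
    · rcases eq_or_ne i m with rfl | h2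
      · rw [hσm, hib, ham]
      · rw [hσ, Equiv.swap_apply_of_ne_of_ne h1 h2]
  set w : Fin n → k := ∑ j, c j • D.v j.val with hw
  set w' : Fin n → k := ∑ j, c (σ j) • D.v j.val with hw'
  set H : Fin n → k := (c i₀)⁻¹ • ((1 + c i₀) • D.v m.val - w') with hH
  set gfam : Fin D.t → Fin n → k := fun i => if i = m then w else D.v (σ i).val with hgfam
  set hfam : Fin D.t → Fin n → k := fun i => if i = i₀ then H else D.v (σ i).val with hhfam
  have hkw : (D.X ^ b) *ᵥ w = 0 := by
    rw [← mulVecLin_apply, hw, map_sum]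
    apply Finset.sum_eq_zero
    intro j _
    rw [_root_.map_smul, mulVecLin_apply]
    by_cases hcj : c j = 0
    · rw [hcj, zero_smul]
    · rw [D.Xpow_vmul j b (hble j hcj), smul_zero]
  have hkw' : (D.X ^ b) *ᵥ w' = 0 := by
    rw [← mulVecLin_apply, hw', map_sum]
    apply Finset.sum_eq_zero
    intro j _
    rw [_root_.map_smul, mulVecLin_apply]
    by_cases hcj : c (σ j) = 0
    · rw [hcj, zero_smul]
    · rw [D.Xpow_vmul j b (by rw [← haσ j]; exact hble (σ j) hcj), smul_zero]
  have hXbvm : (D.X ^ b) *ᵥ D.v m.val = 0 := by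
    rw [← ham]
    exact D.kill' m
  have hkg : D.KillFam gfam := by
    intro i
    simp only [hgfam]
    by_cases him : i = m
    · subst him
      rw [if_pos rfl, ham]
      exact hkw
    · rw [if_neg him, ← haσ i]
      exact D.kill' (σ i)
  have hkh : D.KillFam hfam := by
    intro i
    simp only [hhfam]
    by_cases hii : i = i₀
    · subst hii
      rw [if_pos rfl, hH, hib, mulVec_smul, mulVec_sub, mulVec_smul, hXbvm, hkw']
      simp
    · rw [if_neg hii, ← haσ i]
      exact D.kill' (σ i)
  have sum1 : ∑ j, c (σ j) • D.v (σ j).val = w := by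
    rw [hw]
    exact Equiv.sum_comp σ (fun j => c j • D.v j.val)
  have sum2 : ∑ j, c j • D.v (σ j).val = w' := by
    rw [hw']
    have h2 := Equiv.sum_comp σ (fun j => c (σ j) • D.v j.val)
    simp only [hσσ] at h2
    exact h2
  have φg_v : ∀ j : Fin D.t, D.Phi gfam (D.v j.val) = gfam j := fun j => D.Phi_v gfam j
  have φh_v : ∀ j : Fin D.t, D.Phi hfam (D.v j.val) = hfam j := fun j => D.Phi_v hfam j
  have φg_w' : D.Phi gfam w' = w + c i₀ • (w - D.v i₀.val) := by
    rw [hw', map_sum]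
    simp only [_root_.map_smul, φg_v]
    have hd : ∀ j : Fin D.t,
        gfam j = D.v (σ j).val + (if j = m then w - D.v (σ m).val else 0) := by
      intro j
      simp only [hgfam]
      by_cases hj : j = m
      · subst hj; simp
      · simp [hj]
    simp only [hd, smul_add, Finset.sum_add_distrib]
    rw [sum1]
    congr 1
    simp only [smul_ite, smul_zero]
    rw [Finset.sum_ite_eq' Finset.univ m]
    simp [hσm]
  have φh_w : D.Phi hfam w = w' + c i₀ • (H - D.v m.val) := by
    rw [hw, map_sum]
    simp only [_root_.map_smul, φh_v]
    have hd : ∀ j : Fin D.t,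
        hfam j = D.v (σ j).val + (if j = i₀ then H - D.v (σ i₀).val else 0) := by
      intro j
      simp only [hhfam]
      by_cases hj : j = i₀
      · subst hj; simp
      · simp [hj]
    simp only [hd, smul_add, Finset.sum_add_distrib]
    rw [sum2]
    congr 1
    simp only [smul_ite, smul_zero]
    rw [Finset.sum_ite_eq' Finset.univ i₀]
    simp [hσi₀]
  have hgm : gfam m = w := by simp only [hgfam]; simp
  have hinv1 : ∀ i : Fin D.t, D.Phi gfam (hfam i) = D.v i.val := by
    intro i
    simp only [hhfam]
    by_cases hii : i = i₀
    · rw [if_pos hii, hii, hH, _root_.map_smul, map_sub, _root_.map_smul, φg_v m, hgm, φg_w']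
      have key : (1 + c i₀) • w - (w + c i₀ • (w - D.v i₀.val)) = c i₀ • D.v i₀.val := by
        module
      rw [key, smul_smul, inv_mul_cancel₀ hc₀, one_smul]
    · rw [if_neg hii, φg_v (σ i)]
      have hne : σ i ≠ m := by
        intro hE
        apply hii
        have h2 : σ (σ i) = σ m := congrArg σ hE
        rw [hσσ] at h2
        rw [h2, hσm]
      simp only [hgfam, if_neg hne, hσσ]
  have hinv2 : ∀ i : Fin D.t, D.Phi hfam (gfam i) = D.v i.val := by
    intro i
    simp only [hgfam]
    by_cases him : i = m
    · subst him
      rw [if_pos rfl, φh_w]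
      have hcH : c i₀ • H = (1 + c i₀) • D.v m.val - w' := by
        rw [hH, smul_smul, mul_inv_cancel₀ hc₀, one_smul]
      rw [smul_sub, hcH]
      module
    · rw [if_neg him, φh_v (σ i)]
      have hne : σ i ≠ i₀ := by
        intro hE
        apply him
        have h2 : σ (σ i) = σ i₀ := congrArg σ hE
        rw [hσσ] at h2
        rw [h2, hσi₀]
      simp only [hhfam, if_neg hne, hσσ]
  have hu1 : D.M gfam * D.M hfam = 1 := D.M_mul_eq_one gfam hfam hkg hinv1
  have hu2 : D.M hfam * D.M gfam = 1 := D.M_mul_eq_one hfam gfam hkh hinv2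
  refine ⟨m, ⟨D.M gfam, D.M hfam, hu1, hu2⟩, hlast, D.M_comm gfam hkg, ?_⟩
  show D.M gfam *ᵥ D.v m.val = _
  rw [M_mulVec, φg_v m, hgm, hw]

lemma card_part :
    Set.ncard
      (insert (0 : Fin n → k) { x | ∃ i, i < D.t ∧ D.a (i + 1) < D.a i ∧ x = D.v i })
      = ((Finset.range D.t).image D.a).card + 1 := by
  classical
  set F : Finset ℕ := (Finset.range D.t).filter (fun i => D.a (i + 1) < D.a i) with hF
  have hset : { x : Fin n → k | ∃ i, i < D.t ∧ D.a (i + 1) < D.a i ∧ x = D.v i }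
      = ↑(F.image D.v) := by
    ext x
    simp only [Set.mem_setOf_eq, Finset.coe_image, Set.mem_image, Finset.mem_coe,
      Finset.mem_filter, Finset.mem_range, hF]
    constructor
    · rintro ⟨i, h1, h2, rfl⟩
      exact ⟨i, ⟨h1, h2⟩, rfl⟩
    · rintro ⟨i, ⟨h1, h2⟩, rfl⟩
      exact ⟨i, h1, h2, rfl⟩
  rw [hset, ← Finset.coe_insert, Set.ncard_coe_finset]
  have h0 : (0 : Fin n → k) ∉ F.image D.v := by
    simp only [Finset.mem_image, hF, Finset.mem_filter, Finset.mem_range]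
    rintro ⟨i, ⟨h1, h2⟩, h3⟩
    exact D.B.ne_zero (D.idx ⟨i, h1⟩) (by rw [B_idx]; exact h3)
  rw [Finset.card_insert_of_notMem h0]
  congr 1
  have hinj : Set.InjOn D.v ↑F := by
    intro i hi j hj hij
    simp only [hF, Finset.coe_filter, Finset.mem_coe, Finset.mem_range,
      Set.mem_setOf_eq] at hi hj
    have hq : D.idx ⟨i, hi.1⟩ = D.idx ⟨j, hj.1⟩ :=
      D.B.injective (by rw [B_idx, B_idx]; exact hij)
    exact congrArg (fun q => (Sigma.fst q).val) hq
  rw [Finset.card_image_of_injOn hinj]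
  apply Finset.card_nbij (fun i => D.a i)
  · intro i hi
    simp only [hF, Finset.mem_coe, Finset.mem_filter, Finset.mem_range] at hi
    exact Finset.mem_image_of_mem _ (Finset.mem_range.mpr hi.1)
  · intro i hi j hj hij
    simp only [hF, Finset.coe_filter, Finset.mem_coe, Finset.mem_range,
      Set.mem_setOf_eq] at hi hj
    have hij' : D.a i = D.a j := hij
    by_contra hne
    rcases Nat.lt_or_ge i j with h | h
    · have := D.anti (show i + 1 ≤ j by omega)
      omega
    · have hlt : j < i := by omega
      have := D.anti (show j + 1 ≤ i by omega)
      omega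
  · intro val hval
    simp only [Finset.coe_image, Set.mem_image, Finset.mem_coe, Finset.mem_range] at hval
    obtain ⟨j, hj, rfl⟩ := hval
    set T2 : Finset ℕ := (Finset.range D.t).filter (fun i => D.a i = D.a j ∧ j ≤ i) with hT2
    have hT2ne : T2.Nonempty := ⟨j, by simp [hT2, hj]⟩
    set i := T2.max' hT2ne with hi
    have him : i ∈ T2 := T2.max'_mem hT2ne
    simp only [hT2, Finset.mem_filter, Finset.mem_range] at him
    refine ⟨i, ?_, him.2.1⟩
    simp only [hF, Finset.coe_filter, Finset.mem_coe, Finset.mem_range, Set.mem_setOf_eq]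
    refine ⟨him.1, ?_⟩
    by_cases hlt : i + 1 < D.t
    · rcases lt_or_eq_of_le (D.anti (Nat.le_succ i)) with h | h
      · exact h
      · exfalso
        have hmem : i + 1 ∈ T2 := by
          simp only [hT2, Finset.mem_filter, Finset.mem_range]
          exact ⟨hlt, h.trans him.2.1, by omega⟩
        have hle2 := T2.le_max' (i + 1) hmem
        rw [← hi] at hle2
        omega
    · have h00 : D.a (i + 1) = 0 := by
        by_contra h00
        exact hlt ((D.pos_iff _).mp h00)
      have hne : D.a i ≠ 0 := (D.pos_iff i).mpr him.1
      omega

end JordanData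

/-- `q` is an admissible label for the partition: `q = t` or `q = d₁ + ⋯ + d_{j-1}` for
some `j ≤ r`, i.e. `q < t` and `q` is the first (0-based) index of its block of equal
parts. -/
def JordanData.Admissible {k : Type*} [Field k] {n : ℕ} (D : JordanData k n) (q : ℕ) :
    Prop :=
  q = D.t ∨ (q < D.t ∧ ∀ i < q, D.a q < D.a i)

/-- `w` is the vector of the standard representative `(J_λ, w_q)` of type `λ[q]`:
for `q = t` it is `0`, and for `q < t` it is `u_j = v_{d₁+⋯+d_j}`, the Jordan generator
indexed (0-based) by the last index `m` of the block of parts equal to `a q`. -/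
def JordanData.StdVec {k : Type*} [Field k] {n : ℕ} (D : JordanData k n) (q : ℕ)
    (w : Fin n → k) : Prop :=
  (q = D.t ∧ w = 0) ∨
  (q < D.t ∧ ∃ m, m < D.t ∧ D.a m = D.a q ∧ (∀ i < D.t, D.a i = D.a q → i ≤ m) ∧
    w = D.v m)

/-- The `Ad(Ḡ)`-orbit of a point `(X, w)` of `glₙ(k) × kⁿ` under the enhanced group
`Ḡ = GLₙ(k) ⋉ kⁿ`, where `Ad(g,v)(X,w) = (gXg⁻¹, −(gXg⁻¹)v + gw)`. -/
def enhOrbit {k : Type*} [Field k] {n : ℕ}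
    (p : Matrix (Fin n) (Fin n) k × (Fin n → k)) :
    Set (Matrix (Fin n) (Fin n) k × (Fin n → k)) :=
  { y | ∃ g : (Matrix (Fin n) (Fin n) k)ˣ, ∃ u : Fin n → k,
      y.1 = g.val * p.1 * (g⁻¹).val ∧
      y.2 = -((g.val * p.1 * (g⁻¹).val) *ᵥ u) + g.val *ᵥ p.2 }

/-- For a partition `λ ≠ (1ⁿ)` of `n` (so `J = J_λ ≠ 0`, i.e. the
largest part is at least 2), the centralizer `G_J` acting on `kⁿ/im(J)` has exactly
`r + 1` orbits, where `r` is the number of distinct parts: the orbits of the images of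
`u₁, …, u_r` (the last Jordan generators of each block) and of `0`. -/
theorem centralizer_orbits_on_quotient
    {k : Type*} [Field k] [IsAlgClosed k] {n : ℕ} (hn : 1 ≤ n)
    (D : JordanData k n) (hne : 2 ≤ D.a 0) :
    (∀ y : (Fin n → k) ⧸ LinearMap.range D.X.mulVecLin,
      ∃! x : Fin n → k,
        x ∈ insert (0 : Fin n → k)
          { x | ∃ i, i < D.t ∧ D.a (i + 1) < D.a i ∧ x = D.v i } ∧
        ∃ g : (Matrix (Fin n) (Fin n) k)ˣ, g.val * D.X = D.X * g.val ∧
          y = Submodule.Quotient.mk (g.val *ᵥ x)) ∧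
    Set.ncard
      (insert (0 : Fin n → k) { x | ∃ i, i < D.t ∧ D.a (i + 1) < D.a i ∧ x = D.v i })
      = ((Finset.range D.t).image D.a).card + 1 := by
  classical
  constructor
  · intro y
    obtain ⟨x₀, hx₀⟩ := Submodule.Quotient.mk_surjective _ y
    set c : Fin D.t → k := fun i => D.B.repr x₀ (D.idx i) with hc
    by_cases hzero : ∀ i : Fin D.t, c i = 0
    · have h0cls : (Submodule.Quotient.mk x₀ :
          (Fin n → k) ⧸ LinearMap.range D.X.mulVecLin) = Submodule.Quotient.mk 0 := by
        rw [Submodule.Quotient.eq]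
        simpa using D.mem_range_of_repr_idx_zero x₀ hzero
      refine ⟨0, ⟨Set.mem_insert _ _, 1, by simp, ?_⟩, ?_⟩
      · have h00 : ((1 : (Matrix (Fin n) (Fin n) k)ˣ) :
            Matrix (Fin n) (Fin n) k) *ᵥ (0 : Fin n → k) = 0 := by
          simp
        rw [← hx₀, h00]
        exact h0cls
      · rintro x' ⟨hx'S, g', hg', hy'⟩
        rcases hx'S with rfl | ⟨i, hit, hlast', rfl⟩
        · rfl
        · exfalso
          apply D.mk_vm_ne_zero ⟨i, hit⟩ g' hg'
          show (Submodule.Quotient.mk (g'.val *ᵥ D.v i) :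
            (Fin n → k) ⧸ LinearMap.range D.X.mulVecLin) = Submodule.Quotient.mk 0
          rw [← hy', ← hx₀]
          exact h0cls
    · push_neg at hzero
      obtain ⟨m, g, hlast, hgc, hgv⟩ := D.exists_unit c hzero
      have hmkeq : y = Submodule.Quotient.mk (g.val *ᵥ D.v m.val) := by
        rw [hgv, ← hx₀, Submodule.Quotient.eq]
        apply D.mem_range_of_repr_idx_zero
        intro i
        rw [map_sub, Finsupp.sub_apply, D.repr_sum_v c i]
        simp [hc]
      refine ⟨D.v m.val,
        ⟨Set.mem_insert_of_mem _ ⟨m.val, m.isLt, hlast, rfl⟩, g, hgc, hmkeq⟩, ?_⟩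
      rintro x' ⟨hx'S, g', hg', hy'⟩
      rcases hx'S with rfl | ⟨i, hit, hlast', rfl⟩
      · exfalso
        apply D.mk_vm_ne_zero m g hgc
        rw [← hmkeq, hy']
        have h00 : g'.val *ᵥ (0 : Fin n → k) = 0 := by simp
        rw [h00]
      · have h1 := D.a_le_of_mk_eq m ⟨i, hit⟩ g g' hgc hg' (hmkeq.symm.trans hy')
        have h2 := D.a_le_of_mk_eq ⟨i, hit⟩ m g' g hg' hgc (hy'.symm.trans hmkeq)
        have hmm : m = (⟨i, hit⟩ : Fin D.t) :=
          D.last_unique hlast hlast' (le_antisymm h2 h1)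
        rw [hmm]
  · exact D.card_part
end

section
/- Let λ be a partition of n and let (J_λ, u₁) be the standard representative of type λ[0] (i.e. q = 0, u₁ = v_{d₁}). Then the Zariski closure in glₙ(k) × kⁿ of the Ad(Ḡ)-orbit of (J_λ, u₁) equals C̄_λ × kⁿ, where C̄_λ is the Zariski closure in glₙ(k) of the GLₙ(k)-conjugacy class of J_λ. -/
open Matrix MvPolynomial

/-- The Zariski closure of a subset of the affine space `glₙ(k) × kⁿ`: the set of points
at which every polynomial (in the linear coordinates) vanishing identically on `S`
vanishes. -/
def pairClosure {k : Type*} [Field k] {n : ℕ}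
    (S : Set (Matrix (Fin n) (Fin n) k × (Fin n → k))) :
    Set (Matrix (Fin n) (Fin n) k × (Fin n → k)) :=
  { p | ∀ f : MvPolynomial ((Fin n × Fin n) ⊕ Fin n) k,
      (∀ s ∈ S, eval (pairCoords s) f = 0) → eval (pairCoords p) f = 0 }

/-- The `GLₙ(k)`-conjugacy class of a matrix. -/
def conjClass {k : Type*} [Field k] {n : ℕ} (X : Matrix (Fin n) (Fin n) k) :
    Set (Matrix (Fin n) (Fin n) k) :=
  { Y | ∃ g : (Matrix (Fin n) (Fin n) k)ˣ, Y = g.val * X * (g⁻¹).val }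

/-- The coordinates of a point of the affine space `glₙ(k)`. -/
def matCoords {k : Type*} [CommRing k] {n : ℕ} (Y : Matrix (Fin n) (Fin n) k) :
    Fin n × Fin n → k :=
  fun ij => Y ij.1 ij.2

/-- The Zariski closure of a subset of the affine space `glₙ(k)`. -/
def matClosure {k : Type*} [Field k] {n : ℕ} (S : Set (Matrix (Fin n) (Fin n) k)) :
    Set (Matrix (Fin n) (Fin n) k) :=
  { Y | ∀ f : MvPolynomial (Fin n × Fin n) k,
      (∀ s ∈ S, eval (matCoords s) f = 0) → eval (matCoords Y) f = 0 }

section Aux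

variable {k : Type*} [Field k] {n : ℕ}

private noncomputable def jdB (D : JordanData k n) : Module.Basis (Σ i : Fin D.t, Fin (D.a i.val)) k (Fin n → k) :=
  Module.Basis.mk D.basis_indep (le_of_eq D.basis_span.symm)

private lemma jdB_apply (D : JordanData k n) (p : Σ i : Fin D.t, Fin (D.a i.val)) :
    jdB D p = (D.X ^ p.2.val) *ᵥ D.v p.1.val :=
  Module.Basis.mk_apply _ _ _

private lemma jdB_apply' (D : JordanData k n) (i : Fin D.t) (j : Fin (D.a i.val)) :
    jdB D ⟨i, j⟩ = (D.X ^ j.val) *ᵥ D.v i.val :=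
  Module.Basis.mk_apply _ _ _

private noncomputable def jdZ (D : JordanData k n) (zv : Fin D.t → (Fin n → k)) :
    (Fin n → k) →ₗ[k] (Fin n → k) :=
  (jdB D).constr k fun p => (D.X ^ p.2.val) *ᵥ zv p.1

private lemma jdZ_basis (D : JordanData k n) (zv : Fin D.t → (Fin n → k))
    (p : Σ i : Fin D.t, Fin (D.a i.val)) :
    jdZ D zv (jdB D p) = (D.X ^ p.2.val) *ᵥ zv p.1 :=
  Module.Basis.constr_basis _ _ _ _

private lemma jdZ_basis' (D : JordanData k n) (zv : Fin D.t → (Fin n → k))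
    (i : Fin D.t) (j : Fin (D.a i.val)) :
    jdZ D zv (jdB D ⟨i, j⟩) = (D.X ^ j.val) *ᵥ zv i :=
  Module.Basis.constr_basis _ _ _ _

private lemma jd_comm (D : JordanData k n) (zv : Fin D.t → (Fin n → k))
    (hzv : ∀ i : Fin D.t, (D.X ^ D.a i.val) *ᵥ zv i = 0) (u : Fin n → k) :
    jdZ D zv (D.X *ᵥ u) = D.X *ᵥ jdZ D zv u := by
  have h : (jdZ D zv) ∘ₗ D.X.mulVecLin = D.X.mulVecLin ∘ₗ (jdZ D zv) := by
    apply (jdB D).ext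
    rintro ⟨i, j⟩
    simp only [LinearMap.comp_apply, Matrix.mulVecLin_apply]
    rw [jdZ_basis', jdB_apply', Matrix.mulVec_mulVec, Matrix.mulVec_mulVec,
      ← pow_succ']
    rcases Nat.lt_or_ge (j.val + 1) (D.a i.val) with hj | hj
    · rw [show (D.X ^ (j.val + 1)) *ᵥ D.v i.val = jdB D ⟨i, ⟨j.val + 1, hj⟩⟩ from
        (jdB_apply' D i ⟨j.val + 1, hj⟩).symm, jdZ_basis']
    · have he : j.val + 1 = D.a i.val := le_antisymm (Nat.succ_le_of_lt j.isLt) hj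
      rw [he, D.kill i.val i.isLt, map_zero, hzv i]
  exact LinearMap.ext_iff.mp h u

private lemma jd_commPow (D : JordanData k n) (zv : Fin D.t → (Fin n → k))
    (hzv : ∀ i : Fin D.t, (D.X ^ D.a i.val) *ᵥ zv i = 0) (j : ℕ) (u : Fin n → k) :
    jdZ D zv ((D.X ^ j) *ᵥ u) = (D.X ^ j) *ᵥ jdZ D zv u := by
  induction j generalizing u with
  | zero => simp
  | succ j ih =>
      rw [pow_succ, ← Matrix.mulVec_mulVec, ih, jd_comm D zv hzv,
        Matrix.mulVec_mulVec, ← pow_succ]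

private lemma jd_v (D : JordanData k n) (zv : Fin D.t → (Fin n → k)) (i : Fin D.t) :
    jdZ D zv (D.v i.val) = zv i := by
  have h0 : 0 < D.a i.val := Nat.pos_of_ne_zero ((D.pos_iff i.val).mpr i.isLt)
  have hv : D.v i.val = jdB D ⟨i, ⟨0, h0⟩⟩ := by rw [jdB_apply]; simp
  rw [hv, jdZ_basis]; simp

private lemma jd_inv (D : JordanData k n) (zv zv' : Fin D.t → (Fin n → k))
    (hzv : ∀ i : Fin D.t, (D.X ^ D.a i.val) *ᵥ zv i = 0)
    (h : ∀ i : Fin D.t, jdZ D zv (zv' i) = D.v i.val) (u : Fin n → k) :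
    jdZ D zv (jdZ D zv' u) = u := by
  have hcomp : (jdZ D zv) ∘ₗ (jdZ D zv') = LinearMap.id := by
    apply (jdB D).ext
    rintro ⟨i, j⟩
    simp only [LinearMap.comp_apply, LinearMap.id_apply]
    rw [jdZ_basis', jd_commPow D zv hzv, h, ← jdB_apply']
  exact LinearMap.ext_iff.mp hcomp u

private lemma kill_max (D : JordanData k n) {m : ℕ}
    (hmax : ∀ i < D.t, D.a i ≤ D.a m) (i : ℕ) (hi : i < D.t) :
    (D.X ^ D.a m) *ᵥ D.v i = 0 := by
  have h := D.kill i hi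
  have h2 : D.a m = (D.a m - D.a i) + D.a i := (Nat.sub_add_cancel (hmax i hi)).symm
  rw [h2, pow_add, ← Matrix.mulVec_mulVec, h, Matrix.mulVec_zero]

private lemma kill_sum (D : JordanData k n) {m : ℕ}
    (hmax : ∀ i < D.t, D.a i ≤ D.a m) (f : Fin D.t → k) :
    (D.X ^ D.a m) *ᵥ (∑ i' : Fin D.t, f i' • D.v i'.val) = 0 := by
  rw [show (D.X ^ D.a m) *ᵥ (∑ i' : Fin D.t, f i' • D.v i'.val)
      = (D.X ^ D.a m).mulVecLin (∑ i' : Fin D.t, f i' • D.v i'.val) from rfl, map_sum]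
  refine Finset.sum_eq_zero fun i' _ => ?_
  rw [_root_.map_smul]
  simp [Matrix.mulVecLin_apply, kill_max D hmax i'.val i'.isLt]

private noncomputable def zvA (D : JordanData k n) (m : ℕ) (c : k) (ε : Fin D.t → k) :
    Fin D.t → Fin n → k :=
  fun i => if i.val = m then c • D.v m + ∑ i' : Fin D.t, ε i' • D.v i'.val else D.v i.val

private noncomputable def zvB (D : JordanData k n) (m : ℕ) (c : k) (ε : Fin D.t → k) :
    Fin D.t → Fin n → k :=
  fun i => if i.val = m then c⁻¹ • D.v m - ∑ i' : Fin D.t, (c⁻¹ * ε i') • D.v i'.val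
    else D.v i.val

private lemma zvA_kill (D : JordanData k n) {m : ℕ} (hm : m < D.t)
    (hmax : ∀ i < D.t, D.a i ≤ D.a m) (c : k) (ε : Fin D.t → k) (i : Fin D.t) :
    (D.X ^ D.a i.val) *ᵥ zvA D m c ε i = 0 := by
  by_cases hi : i.val = m
  · simp only [zvA, hi, if_true, eq_self_iff_true]
    rw [Matrix.mulVec_add, Matrix.mulVec_smul, kill_max D hmax m hm, kill_sum D hmax,
      smul_zero, add_zero]
  · simp only [zvA, if_neg hi]
    exact D.kill i.val i.isLt

private lemma zvB_kill (D : JordanData k n) {m : ℕ} (hm : m < D.t)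
    (hmax : ∀ i < D.t, D.a i ≤ D.a m) (c : k) (ε : Fin D.t → k) (i : Fin D.t) :
    (D.X ^ D.a i.val) *ᵥ zvB D m c ε i = 0 := by
  by_cases hi : i.val = m
  · simp only [zvB, hi, if_true, eq_self_iff_true]
    rw [Matrix.mulVec_sub, Matrix.mulVec_smul, kill_max D hmax m hm,
      kill_sum D hmax, smul_zero, sub_zero]
  · simp only [zvB, if_neg hi]
    exact D.kill i.val i.isLt

private lemma jd_AB (D : JordanData k n) {m : ℕ} (hm : m < D.t)
    {c : k} (hc : c ≠ 0) {ε : Fin D.t → k} (hε : ∀ i : Fin D.t, i.val = m → ε i = 0)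
    (i : Fin D.t) : jdZ D (zvA D m c ε) (zvB D m c ε i) = D.v i.val := by
  by_cases hi : i.val = m
  · have hBi : zvB D m c ε i
        = c⁻¹ • D.v m - ∑ i' : Fin D.t, (c⁻¹ * ε i') • D.v i'.val := by
      simp only [zvB, if_pos hi]
    have hZm : jdZ D (zvA D m c ε) (D.v m)
        = c • D.v m + ∑ i' : Fin D.t, ε i' • D.v i'.val := by
      have h := jd_v D (zvA D m c ε) ⟨m, hm⟩
      simpa [zvA] using h
    have hsum : ∀ i' : Fin D.t,
        jdZ D (zvA D m c ε) ((c⁻¹ * ε i') • D.v i'.val)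
          = (c⁻¹ * ε i') • D.v i'.val := by
      intro i'
      rw [_root_.map_smul, jd_v]
      by_cases hii : i'.val = m
      · rw [hε i' hii]; simp
      · simp [zvA, if_neg hii]
    rw [hBi, map_sub, _root_.map_smul, hZm, map_sum]
    simp only [hsum]
    rw [smul_add, smul_smul, inv_mul_cancel₀ hc, one_smul, Finset.smul_sum]
    simp only [smul_smul]
    rw [add_sub_cancel_right, hi]
  · have hBi : zvB D m c ε i = D.v i.val := by simp only [zvB, if_neg hi]
    rw [hBi, jd_v]
    simp [zvA, if_neg hi]

private lemma jd_BA (D : JordanData k n) {m : ℕ} (hm : m < D.t)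
    {c : k} (hc : c ≠ 0) {ε : Fin D.t → k} (hε : ∀ i : Fin D.t, i.val = m → ε i = 0)
    (i : Fin D.t) : jdZ D (zvB D m c ε) (zvA D m c ε i) = D.v i.val := by
  by_cases hi : i.val = m
  · have hAi : zvA D m c ε i
        = c • D.v m + ∑ i' : Fin D.t, ε i' • D.v i'.val := by
      simp only [zvA, if_pos hi]
    have hZm : jdZ D (zvB D m c ε) (D.v m)
        = c⁻¹ • D.v m - ∑ i' : Fin D.t, (c⁻¹ * ε i') • D.v i'.val := by
      have h := jd_v D (zvB D m c ε) ⟨m, hm⟩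
      simpa [zvB] using h
    have hsum : ∀ i' : Fin D.t,
        jdZ D (zvB D m c ε) (ε i' • D.v i'.val) = ε i' • D.v i'.val := by
      intro i'
      rw [_root_.map_smul, jd_v]
      by_cases hii : i'.val = m
      · rw [hε i' hii]; simp
      · simp [zvB, if_neg hii]
    rw [hAi, map_add, _root_.map_smul, hZm, map_sum]
    simp only [hsum]
    rw [smul_sub, smul_smul, mul_inv_cancel₀ hc, one_smul, Finset.smul_sum]
    simp only [smul_smul, mul_inv_cancel_left₀ hc]
    rw [sub_add_cancel, hi]
  · have hAi : zvA D m c ε i = D.v i.val := by simp only [zvA, if_neg hi]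
    rw [hAi, jd_v]
    simp [zvB, if_neg hi]


private lemma eval_subst_mat (A : Matrix (Fin n) (Fin n) k) (y : Fin n → k)
    (f : MvPolynomial ((Fin n × Fin n) ⊕ Fin n) k) :
    eval y (aeval (Sum.elim (fun ij => C (A ij.1 ij.2)) MvPolynomial.X) f)
      = eval (pairCoords (A, y)) f := by
  rw [MvPolynomial.aeval_def, MvPolynomial.eval₂_comp_left (eval y)]
  have h1 : (eval y).comp (algebraMap k (MvPolynomial (Fin n) k)) = RingHom.id k := by
    ext a; simp
  have h2 : (eval y) ∘ (Sum.elim (fun ij => C (A ij.1 ij.2)) MvPolynomial.X)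
      = pairCoords (A, y) := by
    funext s; cases s <;> simp [pairCoords]
  rw [h1, h2]
  rfl

private lemma eval_subst_vec (A : Matrix (Fin n) (Fin n) k) (y : Fin n → k)
    (f : MvPolynomial ((Fin n × Fin n) ⊕ Fin n) k) :
    eval (matCoords A) (aeval (Sum.elim
        (fun ij => (MvPolynomial.X ij : MvPolynomial (Fin n × Fin n) k))
        (fun i => C (y i))) f)
      = eval (pairCoords (A, y)) f := by
  rw [MvPolynomial.aeval_def, MvPolynomial.eval₂_comp_left (eval (matCoords A))]
  have h1 : (eval (matCoords A)).comp (algebraMap k (MvPolynomial (Fin n × Fin n) k))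
      = RingHom.id k := by
    ext a; simp
  have h2 : (eval (matCoords A)) ∘ (Sum.elim
        (fun ij => (MvPolynomial.X ij : MvPolynomial (Fin n × Fin n) k))
        (fun i => C (y i)))
      = pairCoords (A, y) := by
    funext s; cases s <;> simp [pairCoords, matCoords]
  rw [h1, h2]
  rfl

private lemma eval_linear (ℓ : (Fin n → k) →ₗ[k] k) (y : Fin n → k) :
    eval y (∑ i : Fin n, C (ℓ (Pi.single i 1)) * MvPolynomial.X i) = ℓ y := by
  rw [map_sum]
  simp only [_root_.map_mul, eval_C, eval_X]
  conv_rhs => rw [← Finset.univ_sum_single y, map_sum]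
  refine Finset.sum_congr rfl fun i _ => ?_
  have h : (Pi.single i (y i) : Fin n → k) = y i • (Pi.single i (1 : k) : Fin n → k) := by
    rw [← Pi.single_smul', smul_eq_mul, mul_one]
  rw [h, _root_.map_smul, smul_eq_mul, mul_comm]

end Aux


/-- For the standard representative `(J_λ, u₁)` of type `λ[0]`, the
Zariski closure in `glₙ(k) × kⁿ` of its `Ad(Ḡ)`-orbit equals `C̄_λ × kⁿ`, where `C̄_λ`
is the Zariski closure of the `GLₙ(k)`-conjugacy class of `J_λ`. -/
theorem enhOrbit_closure_type_zero
    {k : Type*} [Field k] [IsAlgClosed k] {n : ℕ} (hn : 1 ≤ n)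
    (D : JordanData k n) (w : Fin n → k) (hw : D.StdVec 0 w) :
    pairClosure (enhOrbit (D.X, w))
      = { p : Matrix (Fin n) (Fin n) k × (Fin n → k) |
          p.1 ∈ matClosure (conjClass D.X) } := by
  classical
  have ht : 0 < D.t := by
    rcases Nat.eq_zero_or_pos D.t with h0 | h
    · exfalso
      have hs := D.sum_eq
      rw [h0] at hs
      simp at hs
      omega
    · exact h
  obtain ⟨m, hm, hma, -, hwv⟩ :
      ∃ m, m < D.t ∧ D.a m = D.a 0 ∧ (∀ i < D.t, D.a i = D.a 0 → i ≤ m) ∧ w = D.v m := by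
    rcases hw with ⟨h0, -⟩ | ⟨-, m, h1, h2, h3, h4⟩
    · omega
    · exact ⟨m, h1, h2, h3, h4⟩
  have hmax : ∀ i < D.t, D.a i ≤ D.a m := by
    intro i _
    calc D.a i ≤ D.a 0 := D.anti (Nat.zero_le i)
    _ = D.a m := hma.symm
  set im : Fin D.t := ⟨m, hm⟩ with him
  have h0m : 0 < D.a m := Nat.pos_of_ne_zero ((D.pos_iff m).mpr hm)
  set p0 : Σ i : Fin D.t, Fin (D.a i.val) := ⟨im, ⟨0, h0m⟩⟩ with hp0
  set L := (jdB D).coord p0 with hLdef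
  have hBp0 : jdB D p0 = D.v m := by
    rw [hp0, jdB_apply' D im ⟨0, h0m⟩]
    simp [him]
  have hL1 : L (D.v m) = 1 := by
    rw [← hBp0, hLdef, Module.Basis.coord_apply, Module.Basis.repr_self, Finsupp.single_eq_same]
  have hLv : ∀ i : Fin D.t, i ≠ im → L (D.v i.val) = 0 := by
    intro i hi
    have h0i : 0 < D.a i.val := Nat.pos_of_ne_zero ((D.pos_iff i.val).mpr i.isLt)
    have hv : D.v i.val = jdB D ⟨i, ⟨0, h0i⟩⟩ := by rw [jdB_apply']; simp
    rw [hv, hLdef, Module.Basis.coord_apply, Module.Basis.repr_self, Finsupp.single_eq_of_ne]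
    intro h
    exact hi (congrArg Sigma.fst h).symm
  have hLX : ∀ x, L (D.X *ᵥ x) = 0 := by
    have h : L ∘ₗ D.X.mulVecLin = 0 := by
      apply (jdB D).ext
      rintro ⟨i, j⟩
      simp only [LinearMap.comp_apply, Matrix.mulVecLin_apply, LinearMap.zero_apply]
      rw [jdB_apply', Matrix.mulVec_mulVec, ← pow_succ']
      rcases Nat.lt_or_ge (j.val + 1) (D.a i.val) with hj | hj
      · rw [show (D.X ^ (j.val + 1)) *ᵥ D.v i.val = jdB D ⟨i, ⟨j.val + 1, hj⟩⟩ from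
          (jdB_apply' D i ⟨j.val + 1, hj⟩).symm]
        rw [hLdef, Module.Basis.coord_apply, Module.Basis.repr_self, Finsupp.single_eq_of_ne]
        intro hcon
        have := congrArg (fun p : (Σ i : Fin D.t, Fin (D.a i.val)) => p.2.val) hcon
        simp [hp0] at this
      · have he : j.val + 1 = D.a i.val := le_antisymm (Nat.succ_le_of_lt j.isLt) hj
        rw [he, D.kill i.val i.isLt, map_zero]
    intro x
    have := LinearMap.ext_iff.mp h x
    simpa using this
  have hdecomp : ∀ x : Fin n → k, ∃ u : Fin n → k, ∃ ε : Fin D.t → k,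
      (∀ i : Fin D.t, i.val = m → ε i = 0) ∧
      x = D.X *ᵥ u + ((L x) • D.v m + ∑ i' : Fin D.t, ε i' • D.v i'.val) := by
    intro x
    have htop : x ∈ (LinearMap.range D.X.mulVecLin
        ⊔ Submodule.span k (Set.range fun i : Fin D.t => if i = im then 0 else D.v i.val))
        ⊔ Submodule.span k {D.v m} := by
      have hle : Submodule.span k (Set.range (jdB D)) ≤ (LinearMap.range D.X.mulVecLin
          ⊔ Submodule.span k (Set.range fun i : Fin D.t => if i = im then 0 else D.v i.val))
          ⊔ Submodule.span k {D.v m} := by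
        apply Submodule.span_le.mpr
        rintro _ ⟨⟨i, j⟩, rfl⟩
        rw [jdB_apply']
        rcases Nat.eq_zero_or_pos j.val with hj | hj
        · by_cases hi : i = im
          · apply Submodule.mem_sup_right
            apply Submodule.subset_span
            rw [hj, pow_zero, Matrix.one_mulVec, hi]
            rfl
          · apply Submodule.mem_sup_left
            apply Submodule.mem_sup_right
            apply Submodule.subset_span
            refine ⟨i, ?_⟩
            simp only [if_neg hi, hj, pow_zero, Matrix.one_mulVec]
        · apply Submodule.mem_sup_left
          apply Submodule.mem_sup_left
          refine ⟨(D.X ^ (j.val - 1)) *ᵥ D.v i.val, ?_⟩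
          rw [Matrix.mulVecLin_apply, Matrix.mulVec_mulVec, ← pow_succ',
            Nat.sub_add_cancel hj]
      exact hle (by rw [(jdB D).span_eq]; trivial)
    obtain ⟨y, hy, z, hz, hyz⟩ := Submodule.mem_sup.mp htop
    obtain ⟨y1, hy1, y2, hy2, hy12⟩ := Submodule.mem_sup.mp hy
    obtain ⟨u, hu⟩ := hy1
    obtain ⟨s, hs⟩ := Submodule.mem_span_singleton.mp hz
    obtain ⟨cf, hcf⟩ := (Submodule.mem_span_range_iff_exists_fun k).mp hy2
    refine ⟨u, fun i => if i.val = m then 0 else cf i, fun i hi => if_pos hi, ?_⟩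
    have hy2sum : y2 = ∑ i : Fin D.t, (if i.val = m then 0 else cf i) • D.v i.val := by
      rw [← hcf]
      refine Finset.sum_congr rfl fun i _ => ?_
      by_cases hi : i.val = m
      · have hii : i = im := Fin.ext hi
        rw [if_pos hi, if_pos hii]
        simp
      · have hii : i ≠ im := fun h => hi (congrArg Fin.val h)
        rw [if_neg hi, if_neg hii]
    have hLy1 : L y1 = 0 := by
      rw [← hu]
      simpa [Matrix.mulVecLin_apply] using hLX u
    have hLy2 : L y2 = 0 := by
      rw [hy2sum, map_sum]
      refine Finset.sum_eq_zero fun i _ => ?_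
      rw [_root_.map_smul]
      by_cases hi : i.val = m
      · rw [if_pos hi]; simp
      · rw [if_neg hi, hLv i (fun h => hi (congrArg Fin.val h))]
        simp
    have hLx : L x = s := by
      rw [← hyz, ← hy12, ← hs, map_add, map_add, _root_.map_smul, hLy1, hLy2, hL1]
      simp
    rw [hLx, ← hyz, ← hy12, ← hs, ← hu, hy2sum, Matrix.mulVecLin_apply]
    abel
  have horb : ∀ (g : (Matrix (Fin n) (Fin n) k)ˣ) (x : Fin n → k), L x ≠ 0 →
      (g.val * D.X * (g⁻¹).val, g.val *ᵥ x) ∈ enhOrbit (D.X, w) := by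
    intro g x hx
    obtain ⟨u, ε, hε, hxeq⟩ := hdecomp x
    set c := L x with hc
    have hkA := zvA_kill D hm hmax c ε
    have hkB := zvB_kill D hm hmax c ε
    have hAB : ∀ y', jdZ D (zvA D m c ε) (jdZ D (zvB D m c ε) y') = y' :=
      jd_inv D _ _ hkA (jd_AB D hm hx hε)
    have hBA : ∀ y', jdZ D (zvB D m c ε) (jdZ D (zvA D m c ε) y') = y' :=
      jd_inv D _ _ hkB (jd_BA D hm hx hε)
    set Mz := LinearMap.toMatrix' (jdZ D (zvA D m c ε)) with hMzdef
    set Mz' := LinearMap.toMatrix' (jdZ D (zvB D m c ε)) with hMz'def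
    have hMM' : Mz * Mz' = 1 := by
      rw [hMzdef, hMz'def, ← LinearMap.toMatrix'_comp,
        show (jdZ D (zvA D m c ε)) ∘ₗ (jdZ D (zvB D m c ε)) = LinearMap.id from
          LinearMap.ext hAB, LinearMap.toMatrix'_id]
    have hM'M : Mz' * Mz = 1 := by
      rw [hMzdef, hMz'def, ← LinearMap.toMatrix'_comp,
        show (jdZ D (zvB D m c ε)) ∘ₗ (jdZ D (zvA D m c ε)) = LinearMap.id from
          LinearMap.ext hBA, LinearMap.toMatrix'_id]
    have hMvec : ∀ y', Mz *ᵥ y' = jdZ D (zvA D m c ε) y' := by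
      intro y'
      rw [hMzdef, ← Matrix.toLin'_apply, Matrix.toLin'_toMatrix']
    have hMzX : Mz * D.X = D.X * Mz := by
      have hcm : (jdZ D (zvA D m c ε)) ∘ₗ D.X.mulVecLin
          = D.X.mulVecLin ∘ₗ (jdZ D (zvA D m c ε)) := by
        apply LinearMap.ext
        intro y'
        simp only [LinearMap.comp_apply, Matrix.mulVecLin_apply]
        exact jd_comm D _ hkA y'
      have h2 := congrArg LinearMap.toMatrix' hcm
      have e : LinearMap.toMatrix' (D.X.mulVecLin) = D.X := by
        rw [← Matrix.toLin'_apply', LinearMap.toMatrix'_toLin']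
      rwa [LinearMap.toMatrix'_comp, LinearMap.toMatrix'_comp, e, ← hMzdef] at h2
    refine ⟨g * ⟨Mz, Mz', hMM', hM'M⟩, g.val *ᵥ (-u), ?_, ?_⟩
    · show g.val * D.X * (g⁻¹).val
        = (g * ⟨Mz, Mz', hMM', hM'M⟩).val * D.X * ((g * ⟨Mz, Mz', hMM', hM'M⟩)⁻¹).val
      rw [_root_.mul_inv_rev, Units.val_mul, Units.val_mul,
        show ((⟨Mz, Mz', hMM', hM'M⟩ : (Matrix (Fin n) (Fin n) k)ˣ) : Matrix (Fin n) (Fin n) k) = Mz from rfl,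
        show (((⟨Mz, Mz', hMM', hM'M⟩ : (Matrix (Fin n) (Fin n) k)ˣ)⁻¹ : (Matrix (Fin n) (Fin n) k)ˣ) : Matrix (Fin n) (Fin n) k) = Mz' from rfl]
      simp only [mul_assoc]
      congr 1
      rw [← mul_assoc Mz D.X, hMzX, mul_assoc D.X Mz, ← mul_assoc Mz Mz', hMM', one_mul]
    · show g.val *ᵥ x
        = -(((g * ⟨Mz, Mz', hMM', hM'M⟩).val * D.X * ((g * ⟨Mz, Mz', hMM', hM'M⟩)⁻¹).val)
            *ᵥ (g.val *ᵥ (-u))) + (g * ⟨Mz, Mz', hMM', hM'M⟩).val *ᵥ w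
      rw [show (g * ⟨Mz, Mz', hMM', hM'M⟩).val * D.X * ((g * ⟨Mz, Mz', hMM', hM'M⟩)⁻¹).val
          = g.val * D.X * (g⁻¹).val from ?_, hwv, Units.val_mul,
        show ((⟨Mz, Mz', hMM', hM'M⟩ : (Matrix (Fin n) (Fin n) k)ˣ) : Matrix (Fin n) (Fin n) k) = Mz from rfl]
      · rw [Matrix.mulVec_mulVec, show g.val * D.X * (g⁻¹).val * g.val = g.val * D.X from by
          rw [mul_assoc, Units.inv_mul, mul_one]]
        rw [Matrix.mulVec_neg, neg_neg, ← Matrix.mulVec_mulVec, ← Matrix.mulVec_mulVec, hMvec]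
        have hZvm : jdZ D (zvA D m c ε) (D.v m)
            = c • D.v m + ∑ i' : Fin D.t, ε i' • D.v i'.val := by
          have h := jd_v D (zvA D m c ε) ⟨m, hm⟩
          simpa [zvA] using h
        rw [hZvm, ← Matrix.mulVec_add, ← hxeq]
      · rw [_root_.mul_inv_rev, Units.val_mul, Units.val_mul,
          show ((⟨Mz, Mz', hMM', hM'M⟩ : (Matrix (Fin n) (Fin n) k)ˣ) : Matrix (Fin n) (Fin n) k) = Mz from rfl,
          show (((⟨Mz, Mz', hMM', hM'M⟩ : (Matrix (Fin n) (Fin n) k)ˣ)⁻¹ : (Matrix (Fin n) (Fin n) k)ˣ) : Matrix (Fin n) (Fin n) k) = Mz' from rfl]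
        simp only [mul_assoc]
        congr 1
        rw [← mul_assoc Mz D.X, hMzX, mul_assoc D.X Mz, ← mul_assoc Mz Mz', hMM', one_mul]
  have hvan : ∀ f : MvPolynomial ((Fin n × Fin n) ⊕ Fin n) k,
      (∀ s ∈ enhOrbit (D.X, w), eval (pairCoords s) f = 0) →
      ∀ (g : (Matrix (Fin n) (Fin n) k)ˣ) (y : Fin n → k),
        eval (pairCoords (g.val * D.X * (g⁻¹).val, y)) f = 0 := by
    intro f hf g y
    set A := g.val * D.X * (g⁻¹).val with hA
    set Fg : MvPolynomial (Fin n) k :=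
      aeval (Sum.elim (fun ij => C (A ij.1 ij.2)) MvPolynomial.X) f with hFg
    set ℓ : (Fin n → k) →ₗ[k] k := L ∘ₗ ((g⁻¹).val).mulVecLin with hℓ
    set P : MvPolynomial (Fin n) k :=
      ∑ i : Fin n, C (ℓ (Pi.single i 1)) * MvPolynomial.X i with hPdef
    have hPev : ∀ z : Fin n → k, eval z P = L ((g⁻¹).val *ᵥ z) := by
      intro z
      rw [hPdef, eval_linear]
      simp [hℓ, Matrix.mulVecLin_apply]
    have hmul : Fg * P = 0 := by
      apply MvPolynomial.funext
      intro z
      rw [_root_.map_mul, map_zero]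
      by_cases hz : L ((g⁻¹).val *ᵥ z) = 0
      · rw [hPev z, hz, mul_zero]
      · have hgz : g.val *ᵥ ((g⁻¹).val *ᵥ z) = z := by
          rw [Matrix.mulVec_mulVec, Units.mul_inv, Matrix.one_mulVec]
        have hmem := horb g ((g⁻¹).val *ᵥ z) hz
        rw [hgz] at hmem
        have h1 : eval z Fg = 0 := by
          rw [hFg, eval_subst_mat A z f]
          have h2 := hf _ hmem
          rwa [← hA] at h2
        rw [h1, zero_mul]
    have hPne : P ≠ 0 := by
      intro h0
      have h1 := hPev (g.val *ᵥ D.v m)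
      rw [h0, map_zero, Matrix.mulVec_mulVec, Units.inv_mul, Matrix.one_mulVec, hL1] at h1
      exact one_ne_zero h1.symm
    have hFg0 : Fg = 0 := by
      rcases mul_eq_zero.mp hmul with h | h
      · exact h
      · exact absurd h hPne
    have hfin : eval (pairCoords (A, y)) f = eval y Fg := by
      rw [hFg, eval_subst_mat]
    rw [hfin, hFg0, map_zero]
  apply Set.eq_of_subset_of_subset
  · intro p hp
    intro h hh
    have h1 : ∀ s ∈ enhOrbit (D.X, w),
        eval (pairCoords s) (rename Sum.inl h) = 0 := by
      intro s hs
      obtain ⟨g, u, hs1, hs2⟩ := hs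
      rw [eval_rename]
      exact hh s.1 ⟨g, hs1⟩
    have h2 := hp (rename Sum.inl h) h1
    rw [eval_rename] at h2
    exact h2
  · intro p hp
    intro f hf
    set ψ := aeval (Sum.elim
        (fun ij => (MvPolynomial.X ij : MvPolynomial (Fin n × Fin n) k))
        (fun i => C (p.2 i))) f with hψ
    have hv : ∀ s ∈ conjClass D.X, eval (matCoords s) ψ = 0 := by
      intro s hs
      obtain ⟨g, rfl⟩ := hs
      rw [hψ, eval_subst_vec]
      exact hvan f hf g p.2
    have h2 := hp ψ hv
    rw [hψ, eval_subst_vec] at h2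
    exact h2
end

section
/- Let λ be a partition of n, q an admissible label for λ, and (J_λ, w_q) the standard representative of type λ[q]. Define ŵ := Σ_{i=1}^{q} Σ_{j=1}^{a_i−1} J_λ^j v_i + Σ_{i=q+1}^{t} Σ_{j=0}^{a_i−1} J_λ^j v_i ∈ kⁿ. Then the Zariski closure in glₙ(k) × kⁿ of the Ad(Ḡ)-orbit of (J_λ, w_q) equals the Zariski closure of the GLₙ(k)-orbit {(g J_λ g⁻¹, g ŵ) : g ∈ GLₙ(k)} of (J_λ, ŵ). -/
open Matrix MvPolynomial

/-- The vector `ŵ := Σ_{i=1}^{q} Σ_{j=1}^{a_i−1} J_λ^j v_i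
+ Σ_{i=q+1}^{t} Σ_{j=0}^{a_i−1} J_λ^j v_i` (written here with 0-indexed generators). -/
def hatW {k : Type*} [Field k] {n : ℕ} (D : JordanData k n) (q : ℕ) : Fin n → k :=
  (∑ i ∈ Finset.range q, ∑ j ∈ Finset.Ico 1 (D.a i), (D.X ^ j) *ᵥ D.v i)
    + ∑ i ∈ Finset.Ico q D.t, ∑ j ∈ Finset.range (D.a i), (D.X ^ j) *ᵥ D.v i
namespace JordanData

variable {k : Type*} [Field k] {n : ℕ} (D : JordanData k n)

/-- The Jordan basis. -/
noncomputable def bas : Module.Basis (Σ i : Fin D.t, Fin (D.a i.val)) k (Fin n → k) :=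
  Module.Basis.mk D.basis_indep (by rw [D.basis_span])

lemma bas_apply (p : Σ i : Fin D.t, Fin (D.a i.val)) :
    D.bas p = (D.X ^ p.2.val) *ᵥ D.v p.1.val := by
  rw [bas, Module.Basis.mk_apply]

lemma a_pos {i : ℕ} (hi : i < D.t) : 0 < D.a i :=
  Nat.pos_of_ne_zero ((D.pos_iff i).mpr hi)

lemma a_le_n {i : ℕ} (hi : i < D.t) : D.a i ≤ n := by
  exact le_of_le_of_eq
    (Finset.single_le_sum (fun j _ => Nat.zero_le (D.a j)) (Finset.mem_range.mpr hi)) D.sum_eq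

lemma powv_eq_zero {i j : ℕ} (hi : i < D.t) (h : D.a i ≤ j) :
    (D.X ^ j) *ᵥ D.v i = 0 := by
  rw [show j = (j - D.a i) + D.a i from (Nat.sub_add_cancel h).symm, pow_add,
    ← Matrix.mulVec_mulVec, D.kill i hi, Matrix.mulVec_zero]

lemma pow_mulVec_eq_zero {i j : ℕ} {x : Fin n → k} (hx : (D.X ^ D.a i) *ᵥ x = 0)
    (h : D.a i ≤ j) : (D.X ^ j) *ᵥ x = 0 := by
  rw [show j = (j - D.a i) + D.a i from (Nat.sub_add_cancel h).symm, pow_add,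
    ← Matrix.mulVec_mulVec, hx, Matrix.mulVec_zero]

/-- The endomorphism sending `X^j v i` to `X^j (γ i)`. -/
noncomputable def jmap (γ : ℕ → Fin n → k) : Module.End k (Fin n → k) :=
  (D.bas).constr k (fun p => (D.X ^ p.2.val) *ᵥ γ p.1.val)

lemma jmap_bas (γ : ℕ → Fin n → k) (p : Σ i : Fin D.t, Fin (D.a i.val)) :
    D.jmap γ (D.bas p) = (D.X ^ p.2.val) *ᵥ γ p.1.val :=
  (D.bas).constr_basis k _ p

lemma jmap_apply_pow (γ : ℕ → Fin n → k) (hγ : ∀ i < D.t, (D.X ^ D.a i) *ᵥ γ i = 0)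
    {i : ℕ} (hi : i < D.t) (j : ℕ) :
    D.jmap γ ((D.X ^ j) *ᵥ D.v i) = (D.X ^ j) *ᵥ γ i := by
  rcases lt_or_ge j (D.a i) with hj | hj
  · have := D.jmap_bas γ ⟨⟨i, hi⟩, ⟨j, hj⟩⟩
    rw [bas_apply] at this
    exact this
  · rw [D.powv_eq_zero hi hj, map_zero, D.pow_mulVec_eq_zero (hγ i hi) hj]

lemma jmap_comm (γ : ℕ → Fin n → k) (hγ : ∀ i < D.t, (D.X ^ D.a i) *ᵥ γ i = 0) :
    D.jmap γ * D.X.mulVecLin = D.X.mulVecLin * D.jmap γ := by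
  refine Module.Basis.ext D.bas fun p => ?_
  rw [Module.End.mul_apply, Module.End.mul_apply, bas_apply, Matrix.mulVecLin_apply,
    Matrix.mulVec_mulVec, ← pow_succ', D.jmap_apply_pow γ hγ p.1.isLt,
    D.jmap_apply_pow γ hγ p.1.isLt, Matrix.mulVecLin_apply, Matrix.mulVec_mulVec, ← pow_succ']

lemma mulVecLin_pow_apply (j : ℕ) (x : Fin n → k) :
    (D.X.mulVecLin ^ j) x = (D.X ^ j) *ᵥ x := by
  induction j generalizing x with
  | zero => simp
  | succ j ih =>
    rw [pow_succ, Module.End.mul_apply, Matrix.mulVecLin_apply, ih, Matrix.mulVec_mulVec,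
      ← pow_succ]

lemma mulVecLin_pow_n : D.X.mulVecLin ^ n = 0 := by
  refine Module.Basis.ext D.bas fun p => ?_
  rw [mulVecLin_pow_apply, LinearMap.zero_apply, bas_apply, Matrix.mulVec_mulVec, ← pow_add,
    D.powv_eq_zero p.1.isLt (le_trans (D.a_le_n p.1.isLt) (Nat.le_add_right _ _))]

end JordanData
namespace JordanData

variable {k : Type*} [Field k] {n : ℕ} (D : JordanData k n)

/-- Build a matrix unit from an invertible endomorphism. -/
noncomputable def matUnit (h hinv : Module.End k (Fin n → k))
    (h1 : h * hinv = 1) (h2 : hinv * h = 1) : (Matrix (Fin n) (Fin n) k)ˣ where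
  val := LinearMap.toMatrix' h
  inv := LinearMap.toMatrix' hinv
  val_inv := by
    rw [← LinearMap.toMatrix'_comp, ← Module.End.mul_eq_comp, h1]
    exact LinearMap.toMatrix'_id
  inv_val := by
    rw [← LinearMap.toMatrix'_comp, ← Module.End.mul_eq_comp, h2]
    exact LinearMap.toMatrix'_id

lemma matUnit_mulVec (h hinv : Module.End k (Fin n → k)) (h1 : h * hinv = 1)
    (h2 : hinv * h = 1) (x : Fin n → k) : (matUnit h hinv h1 h2).val *ᵥ x = h x := by
  show (LinearMap.toMatrix' h) *ᵥ x = h x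
  rw [← Matrix.toLin'_apply, Matrix.toLin'_toMatrix']

lemma matUnit_comm (h hinv : Module.End k (Fin n → k)) (h1 : h * hinv = 1)
    (h2 : hinv * h = 1) (hc : h * D.X.mulVecLin = D.X.mulVecLin * h) :
    (matUnit h hinv h1 h2).val * D.X = D.X * (matUnit h hinv h1 h2).val := by
  show LinearMap.toMatrix' h * D.X = D.X * LinearMap.toMatrix' h
  have hX : LinearMap.toMatrix' (D.X.mulVecLin) = D.X := by
    rw [← Matrix.toLin'_apply']
    exact LinearEquiv.apply_symm_apply _ _
  rw [← hX, ← LinearMap.toMatrix'_comp, ← LinearMap.toMatrix'_comp,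
    ← Module.End.mul_eq_comp, ← Module.End.mul_eq_comp, hc]

lemma unit_conj_eq {G : (Matrix (Fin n) (Fin n) k)ˣ} (h : G.val * D.X = D.X * G.val) :
    G.val * D.X * (G⁻¹).val = D.X := by
  rw [h, mul_assoc, Units.mul_inv, mul_one]

end JordanData
namespace JordanData

variable {k : Type*} [Field k] {n : ℕ} (D : JordanData k n)

lemma mulVec_sum' {ι : Type*} (s : Finset ι) (A : Matrix (Fin n) (Fin n) k)
    (f : ι → Fin n → k) : A *ᵥ (∑ i ∈ s, f i) = ∑ i ∈ s, A *ᵥ f i :=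
  map_sum A.mulVecLin f s

lemma tel_Ico (f : ℕ → Fin n → k) {s N : ℕ} (h : s ≤ N) :
    ∑ j ∈ Finset.Ico s N, (f j - f (j + 1)) = f s - f N := by
  have h2 : ∑ j ∈ Finset.range (N - s), (f (s + j) - f (s + j + 1))
      = f (s + 0) - f (s + (N - s)) := Finset.sum_range_sub' (fun j => f (s + j)) (N - s)
  rw [Finset.sum_Ico_eq_sum_range, h2, Nat.add_zero, Nat.add_sub_cancel' h]

lemma shift_Ico (g : ℕ → Fin n → k) {N : ℕ} :
    ∑ j ∈ Finset.Ico 1 N, g j = ∑ j ∈ Finset.range (N - 1), g (j + 1) := by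
  rw [Finset.sum_Ico_eq_sum_range]
  exact Finset.sum_congr rfl fun j _ => by rw [Nat.add_comm]

lemma mulVec_shift (x : Fin n → k) (N : ℕ) :
    D.X *ᵥ (∑ j ∈ Finset.range (N - 1), (D.X ^ j) *ᵥ x)
      = ∑ j ∈ Finset.Ico 1 N, (D.X ^ j) *ᵥ x := by
  rw [mulVec_sum', shift_Ico (fun j => (D.X ^ j) *ᵥ x)]
  refine Finset.sum_congr rfl fun j _ => ?_
  rw [Matrix.mulVec_mulVec, ← pow_succ']

lemma range_sum_eq {N : ℕ} (hN : 0 < N) (x : Fin n → k) :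
    ∑ j ∈ Finset.range N, (D.X ^ j) *ᵥ x = x + ∑ j ∈ Finset.Ico 1 N, (D.X ^ j) *ᵥ x := by
  rw [Finset.range_eq_Ico, Finset.sum_eq_sum_Ico_succ_bot hN, pow_zero, Matrix.one_mulVec]

/-- Key identity: `ŵ = X s + c`. -/
lemma hatW_eq (q : ℕ) (hqt : q ≤ D.t) :
    hatW D q =
      D.X *ᵥ (∑ i ∈ Finset.range D.t,
          ∑ j ∈ Finset.range (D.a i - 1), (D.X ^ j) *ᵥ D.v i)
        + ∑ i ∈ Finset.Ico q D.t, D.v i := by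
  rw [mulVec_sum']
  have h1 : ∀ i ∈ Finset.range D.t,
      D.X *ᵥ (∑ j ∈ Finset.range (D.a i - 1), (D.X ^ j) *ᵥ D.v i)
        = ∑ j ∈ Finset.Ico 1 (D.a i), (D.X ^ j) *ᵥ D.v i := fun i _ => D.mulVec_shift _ _
  rw [Finset.sum_congr rfl h1, Finset.range_eq_Ico,
    ← Finset.sum_Ico_consecutive _ (Nat.zero_le q) hqt, ← Finset.range_eq_Ico, hatW,
    add_assoc, ← Finset.sum_add_distrib]
  congr 1
  refine Finset.sum_congr rfl fun i hi => ?_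
  rw [D.range_sum_eq (D.a_pos (Finset.mem_Ico.mp hi).2), add_comm]

end JordanData
namespace JordanData

variable {k : Type*} [Field k] {n : ℕ} (D : JordanData k n)

lemma conj_mul_eq (g G : (Matrix (Fin n) (Fin n) k)ˣ) (h : G.val * D.X = D.X * G.val) :
    (g * G).val * D.X * ((g * G)⁻¹).val = g.val * D.X * (g⁻¹).val := by
  rw [_root_.mul_inv_rev, Units.val_mul, Units.val_mul]
  calc g.val * G.val * D.X * ((G⁻¹).val * (g⁻¹).val)
      = g.val * (G.val * D.X * (G⁻¹).val) * (g⁻¹).val := by noncomm_ring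
    _ = g.val * D.X * (g⁻¹).val := by rw [D.unit_conj_eq h]

section PartB

variable (q m : ℕ) (w : Fin n → k)

/-- `c = Σ_{i ∈ [q,t)} v i`. -/
noncomputable def cvec : Fin n → k := ∑ i ∈ Finset.Ico q D.t, D.v i

lemma kill_cw (hmt : m ≤ D.t) (ham : D.a m = D.a q)
    (hwm : m < D.t → w = D.v m) (hwt : m = D.t → q = D.t ∧ w = 0) : (D.X ^ D.a m) *ᵥ (cvec D q - w) = 0 := by
  have hc : (D.X ^ D.a m) *ᵥ cvec D q = 0 := by
    rw [cvec, mulVec_sum']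
    refine Finset.sum_eq_zero fun i hi => ?_
    rcases Finset.mem_Ico.mp hi with ⟨h1, h2⟩
    exact D.powv_eq_zero h2 (ham ▸ D.anti h1)
  rcases lt_or_eq_of_le hmt with hm | hm
  · rw [Matrix.mulVec_sub, hc, hwm hm, D.kill m hm, sub_zero]
  · rw [Matrix.mulVec_sub, hc, (hwt hm).2, Matrix.mulVec_zero, sub_zero]

/-- The values defining the map `e`. -/
noncomputable def gamE : ℕ → Fin n → k := fun i => if i = m then cvec D q - w else 0

lemma kill_gamE (hmt : m ≤ D.t) (ham : D.a m = D.a q)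
    (hwm : m < D.t → w = D.v m) (hwt : m = D.t → q = D.t ∧ w = 0) : ∀ i < D.t, (D.X ^ D.a i) *ᵥ gamE D q m w i = 0 := by
  intro i hi
  rcases eq_or_ne i m with rfl | hne
  · rw [gamE, if_pos rfl]; exact D.kill_cw q i w hmt ham hwm hwt
  · rw [gamE, if_neg hne, Matrix.mulVec_zero]

lemma emap_sq (hqm : q ≤ m) (hmt : m ≤ D.t) (ham : D.a m = D.a q)
    (hwm : m < D.t → w = D.v m) (hwt : m = D.t → q = D.t ∧ w = 0) : D.jmap (gamE D q m w) * D.jmap (gamE D q m w) = 0 := by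
  set e := D.jmap (gamE D q m w) with he
  refine Module.Basis.ext D.bas fun p => ?_
  rw [Module.End.mul_apply, LinearMap.zero_apply, bas_apply,
    D.jmap_apply_pow _ (D.kill_gamE q m w hmt ham hwm hwt) p.1.isLt]
  rcases eq_or_ne (p.1.val : ℕ) m with hm | hne
  · have hmt' : m < D.t := hm ▸ p.1.isLt
    rw [gamE, if_pos hm, hwm hmt', Matrix.mulVec_sub, map_sub, cvec, mulVec_sum', map_sum]
    have hterm : ∀ i ∈ Finset.Ico q D.t,
        e ((D.X ^ p.2.val) *ᵥ D.v i) = (D.X ^ p.2.val) *ᵥ gamE D q m w i := fun i hi =>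
      D.jmap_apply_pow _ (D.kill_gamE q m w hmt ham hwm hwt) (Finset.mem_Ico.mp hi).2 _
    rw [Finset.sum_congr rfl hterm,
      Finset.sum_eq_single_of_mem m (Finset.mem_Ico.mpr ⟨hqm, hmt'⟩)
        (fun i _ hi => by rw [gamE, if_neg hi, Matrix.mulVec_zero]),
      D.jmap_apply_pow _ (D.kill_gamE q m w hmt ham hwm hwt) hmt', hwm hmt', sub_self]
  · rw [gamE, if_neg hne, Matrix.mulVec_zero, map_zero]

lemma emap_w (hmt : m ≤ D.t) (ham : D.a m = D.a q)
    (hwm : m < D.t → w = D.v m) (hwt : m = D.t → q = D.t ∧ w = 0) : (1 + D.jmap (gamE D q m w)) w = cvec D q := by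
  set e := D.jmap (gamE D q m w) with he
  rcases lt_or_eq_of_le hmt with hm | hm
  · have hew : e w = cvec D q - w := by
      conv_lhs => rw [hwm hm,
        show D.v m = (D.X ^ 0) *ᵥ D.v m by rw [pow_zero, Matrix.one_mulVec]]
      rw [D.jmap_apply_pow _ (D.kill_gamE q m w hmt ham hwm hwt) hm, gamE, if_pos rfl,
        pow_zero, Matrix.one_mulVec]
    rw [LinearMap.add_apply, Module.End.one_apply, hew, add_sub_cancel]
  · rcases hwt hm with ⟨hq, hw0⟩
    rw [hw0, map_zero, cvec, hq, Finset.Ico_self, Finset.sum_empty]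

lemma orb_subset_enhOrbit (hqm : q ≤ m) (hmt : m ≤ D.t) (ham : D.a m = D.a q)
    (hwm : m < D.t → w = D.v m) (hwt : m = D.t → q = D.t ∧ w = 0) :
    {p : Matrix (Fin n) (Fin n) k × (Fin n → k) |
        ∃ g : (Matrix (Fin n) (Fin n) k)ˣ,
          p = (g.val * D.X * (g⁻¹).val, g.val *ᵥ hatW D q)} ⊆ enhOrbit (D.X, w) := by
  rintro p ⟨g, rfl⟩
  have hkill := D.kill_gamE q m w hmt ham hwm hwt
  set e := D.jmap (gamE D q m w) with he
  have he2 : e * e = 0 := D.emap_sq q m w hqm hmt ham hwm hwt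
  have pf1 : (1 + e) * (1 - e) = 1 := by
    have hx : (1 + e) * (1 - e) = 1 - e * e := by
      rw [mul_sub, mul_one, add_mul, one_mul]; abel
    rw [hx, he2, sub_zero]
  have pf2 : (1 - e) * (1 + e) = 1 := by
    have hx : (1 - e) * (1 + e) = 1 - e * e := by
      rw [sub_mul, one_mul, mul_add, mul_one]; abel
    rw [hx, he2, sub_zero]
  have hceL : (1 + e) * D.X.mulVecLin = D.X.mulVecLin * (1 + e) := by
    rw [add_mul, one_mul, mul_add, mul_one, D.jmap_comm _ hkill]
  set G0 : (Matrix (Fin n) (Fin n) k)ˣ := matUnit (1 + e) (1 - e) pf1 pf2 with hG0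
  have hG0comm : G0.val * D.X = D.X * G0.val := D.matUnit_comm (1 + e) (1 - e) pf1 pf2 hceL
  set s : Fin n → k := ∑ i ∈ Finset.range D.t,
    ∑ j ∈ Finset.range (D.a i - 1), (D.X ^ j) *ᵥ D.v i with hs
  refine ⟨g * G0, g.val *ᵥ (-s), ?_, ?_⟩
  · rw [D.conj_mul_eq g G0 hG0comm]
  · rw [D.conj_mul_eq g G0 hG0comm]
    have h1 : (g.val * D.X * (g⁻¹).val) *ᵥ (g.val *ᵥ -s) = g.val *ᵥ (D.X *ᵥ (-s)) := by
      rw [Matrix.mulVec_mulVec, mul_assoc (g.val * D.X), Units.inv_mul, mul_one,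
        ← Matrix.mulVec_mulVec]
    have h2 : (g * G0).val *ᵥ w = g.val *ᵥ cvec D q := by
      rw [Units.val_mul, ← Matrix.mulVec_mulVec, hG0,
        matUnit_mulVec (1 + e) (1 - e) pf1 pf2 w,
        D.emap_w q m w hmt ham hwm hwt]
    rw [h1, h2, Matrix.mulVec_neg, Matrix.mulVec_neg, neg_neg]
    simp only [cvec]
    rw [← Matrix.mulVec_add, ← D.hatW_eq q (hqm.trans hmt)]

end PartB

end JordanData
namespace JordanData

variable {k : Type*} [Field k] {n : ℕ} (D : JordanData k n)

section Part3

variable (q m : ℕ) (u' : Fin n → k)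

/-- Coordinates of `u'` in the Jordan basis. -/
noncomputable def kap : ℕ → ℕ → k := fun i j =>
  if h : i < D.t ∧ j < D.a i then D.bas.repr u' ⟨⟨i, h.1⟩, ⟨j, h.2⟩⟩ else 0

/-- Block components of `u'`. -/
noncomputable def Pblk : ℕ → Fin n → k := fun i =>
  ∑ j ∈ Finset.range (D.a i), kap D u' i j • ((D.X ^ j) *ᵥ D.v i)

lemma kill_Pblk {i b : ℕ} (hi : i < D.t) (hb : D.a i ≤ b) :
    (D.X ^ b) *ᵥ Pblk D u' i = 0 := by
  rw [Pblk, mulVec_sum']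
  refine Finset.sum_eq_zero fun j _ => ?_
  rw [Matrix.mulVec_smul, Matrix.mulVec_mulVec, ← pow_add,
    D.powv_eq_zero hi (hb.trans (Nat.le_add_right _ _)), smul_zero]

lemma sum_Pblk : ∑ i ∈ Finset.range D.t, Pblk D u' i = u' := by
  have h0 := D.bas.sum_repr u'
  rw [← Finset.univ_sigma_univ, Finset.sum_sigma] at h0
  have h1 : ∀ i : Fin D.t,
      (∑ j : Fin (D.a i.val), D.bas.repr u' ⟨i, j⟩ • D.bas ⟨i, j⟩) = Pblk D u' i.val := by
    intro i
    have h2 : ∀ j : Fin (D.a i.val), D.bas.repr u' ⟨i, j⟩ • D.bas ⟨i, j⟩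
        = kap D u' i.val j.val • ((D.X ^ j.val) *ᵥ D.v i.val) := by
      intro j
      rw [kap, dif_pos (⟨i.isLt, j.isLt⟩ : (i : ℕ) < D.t ∧ (j : ℕ) < D.a i.val), bas_apply]
    rw [Finset.sum_congr rfl fun j _ => h2 j]
    exact Fin.sum_univ_eq_sum_range (fun j => kap D u' i.val j • ((D.X ^ j) *ᵥ D.v i.val)) _
  rw [Finset.sum_congr rfl fun i _ => h1 i,
    Fin.sum_univ_eq_sum_range (fun i => Pblk D u' i) D.t] at h0
  exact h0

/-- `r̃`. -/
noncomputable def rtil : Fin n → k :=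
  ∑ j ∈ Finset.range (D.a m - 1), (D.X ^ j) *ᵥ D.v m

lemma kill_rtil (hmt : m ≤ D.t) {b : ℕ} (hb : D.a m ≤ b) :
    (D.X ^ b) *ᵥ rtil D m = 0 := by
  rcases lt_or_eq_of_le hmt with hm | hm
  · rw [rtil, mulVec_sum']
    refine Finset.sum_eq_zero fun j _ => ?_
    rw [Matrix.mulVec_mulVec, ← pow_add, D.powv_eq_zero hm (hb.trans (Nat.le_add_right _ _))]
  · have : D.a m = 0 := by
      by_contra h
      exact absurd ((D.pos_iff m).mp h) (by omega)
    rw [rtil, this]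
    simp

/-- `Θ̃`. -/
noncomputable def Ttil : Fin n → k := (∑ i ∈ Finset.Ico q D.t, Pblk D u' i) - rtil D m

lemma kill_Ttil (hmt : m ≤ D.t) (ham : D.a m = D.a q) {b : ℕ} (hb : D.a m ≤ b) :
    (D.X ^ b) *ᵥ Ttil D q m u' = 0 := by
  rw [Ttil, Matrix.mulVec_sub, mulVec_sum', D.kill_rtil m hmt hb, sub_zero]
  refine Finset.sum_eq_zero fun i hi => ?_
  rcases Finset.mem_Ico.mp hi with ⟨h1, h2⟩
  exact D.kill_Pblk u' h2 (le_trans (ham ▸ D.anti h1) hb)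

/-- `ñ`. -/
noncomputable def ntil : ℕ → Fin n → k := fun i =>
  if i < q then
    (∑ j ∈ Finset.range (D.a i - 1), kap D u' i (j + 1) • ((D.X ^ j) *ᵥ D.v i))
      - Pblk D u' i
  else if i = m then Ttil D q m u' - D.X *ᵥ Ttil D q m u' else 0

lemma kill_ntil (hmt : m ≤ D.t) (ham : D.a m = D.a q) :
    ∀ i < D.t, (D.X ^ D.a i) *ᵥ ntil D q m u' i = 0 := by
  intro i hi
  rw [ntil]
  split_ifs with h1 h2
  · rw [Matrix.mulVec_sub, D.kill_Pblk u' hi le_rfl, sub_zero, mulVec_sum']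
    refine Finset.sum_eq_zero fun j _ => ?_
    rw [Matrix.mulVec_smul, Matrix.mulVec_mulVec, ← pow_add,
      D.powv_eq_zero hi (Nat.le_add_right _ _), smul_zero]
  · rw [h2, Matrix.mulVec_sub, D.kill_Ttil q m u' hmt ham le_rfl, Matrix.mulVec_mulVec,
      ← pow_succ, pow_succ', ← Matrix.mulVec_mulVec,
      D.kill_Ttil q m u' hmt ham le_rfl, Matrix.mulVec_zero, sub_zero]
  · rw [Matrix.mulVec_zero]

/-- `δ⁰`. -/
noncomputable def del0 : ℕ → k := fun i =>
  if i = m then 1 else if i < q then kap D u' i 0 else 0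

/-- `γ` for the limit map `A`. -/
noncomputable def gamA : ℕ → Fin n → k := fun i =>
  del0 D q m u' i • D.v i + D.X *ᵥ ntil D q m u' i

/-- `σ` for the scaling map `S`. -/
noncomputable def sigS : ℕ → Fin n → k := fun i => if i = m then 0 else D.v i

/-- `δ ε`. -/
noncomputable def del (ε : k) : ℕ → k := fun i =>
  del0 D q m u' i + ε * (if i = m then 0 else 1)

lemma kill_gamA (hmt : m ≤ D.t) (ham : D.a m = D.a q) :
    ∀ i < D.t, (D.X ^ D.a i) *ᵥ gamA D q m u' i = 0 := by
  intro i hi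
  rw [gamA, Matrix.mulVec_add, Matrix.mulVec_smul, D.kill i hi, smul_zero, zero_add,
    Matrix.mulVec_mulVec, ← pow_succ, pow_succ', ← Matrix.mulVec_mulVec,
    D.kill_ntil q m u' hmt ham i hi, Matrix.mulVec_zero]

lemma kill_sigS : ∀ i < D.t, (D.X ^ D.a i) *ᵥ sigS D m i = 0 := by
  intro i hi
  rw [sigS]
  split_ifs
  · rw [Matrix.mulVec_zero]
  · exact D.kill i hi

lemma kill_delv (f : ℕ → k) : ∀ i < D.t, (D.X ^ D.a i) *ᵥ (f i • D.v i) = 0 := by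
  intro i hi
  rw [Matrix.mulVec_smul, D.kill i hi, smul_zero]

end Part3

end JordanData
namespace JordanData

variable {k : Type*} [Field k] {n : ℕ} (D : JordanData k n)

section Part3b

variable (q m : ℕ) (u' : Fin n → k) (ε : k)

lemma gam_sig_id : ∀ i,
    gamA D q m u' i + ε • sigS D m i
      = del D q m u' ε i • D.v i + D.X *ᵥ ntil D q m u' i := by
  intro i
  rcases eq_or_ne i m with rfl | hne
  · rw [gamA, sigS, if_pos rfl, smul_zero, add_zero, del, if_pos rfl, mul_zero, add_zero]
  · rw [gamA, sigS, if_neg hne, del, if_neg hne, mul_one, add_smul]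
    abel

lemma hmap_eq :
    D.jmap (gamA D q m u') + ε • D.jmap (sigS D m)
      = D.jmap (fun i => del D q m u' ε i • D.v i)
          + D.X.mulVecLin * D.jmap (ntil D q m u') := by
  refine Module.Basis.ext D.bas fun p => ?_
  rw [LinearMap.add_apply, LinearMap.add_apply, LinearMap.smul_apply, D.jmap_bas, D.jmap_bas,
    D.jmap_bas, Module.End.mul_apply, D.jmap_bas, Matrix.mulVecLin_apply, Matrix.mulVec_mulVec,
    ← pow_succ', pow_succ, ← Matrix.mulVec_mulVec, ← Matrix.mulVec_smul,
    ← Matrix.mulVec_add, ← Matrix.mulVec_add, gam_sig_id D q m u' ε]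

lemma jmap_diag_mul (f g : ℕ → k) (hfg : ∀ i < D.t, g i * f i = 1) :
    D.jmap (fun i => f i • D.v i) * D.jmap (fun i => g i • D.v i) = 1 := by
  refine Module.Basis.ext D.bas fun p => ?_
  rw [Module.End.mul_apply, D.jmap_bas, Matrix.mulVec_smul, _root_.map_smul,
    D.jmap_apply_pow _ (D.kill_delv f) p.1.isLt, Matrix.mulVec_smul, smul_smul,
    hfg _ p.1.isLt, one_smul, Module.End.one_apply, bas_apply]

lemma hmap_comm (hmt : m ≤ D.t) (ham : D.a m = D.a q) :
    (D.jmap (gamA D q m u') + ε • D.jmap (sigS D m)) * D.X.mulVecLin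
      = D.X.mulVecLin * (D.jmap (gamA D q m u') + ε • D.jmap (sigS D m)) := by
  rw [add_mul, mul_add, D.jmap_comm _ (D.kill_gamA q m u' hmt ham), smul_mul_assoc,
    mul_smul_comm, D.jmap_comm _ (D.kill_sigS m)]

lemma hmap_isUnit (hmt : m ≤ D.t) (ham : D.a m = D.a q)
    (hε : ∀ i < D.t, del D q m u' ε i ≠ 0) :
    IsUnit (D.jmap (gamA D q m u') + ε • D.jmap (sigS D m)) := by
  set L := D.X.mulVecLin with hL
  set Dd := D.jmap (fun i => del D q m u' ε i • D.v i) with hDd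
  set Dinv := D.jmap (fun i => (del D q m u' ε i)⁻¹ • D.v i) with hDinv
  set M := D.jmap (ntil D q m u') with hM
  have hDDinv : Dd * Dinv = 1 :=
    D.jmap_diag_mul _ _ (fun i hi => inv_mul_cancel₀ (hε i hi))
  have hDinvD : Dinv * Dd = 1 :=
    D.jmap_diag_mul _ _ (fun i hi => mul_inv_cancel₀ (hε i hi))
  have hDinvL : Dinv * L = L * Dinv := D.jmap_comm _ (D.kill_delv _)
  have hML : M * L = L * M := D.jmap_comm _ (D.kill_ntil q m u' hmt ham)
  have hcom : Commute L (Dinv * M) := by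
    show L * (Dinv * M) = (Dinv * M) * L
    calc L * (Dinv * M) = (L * Dinv) * M := (mul_assoc _ _ _).symm
      _ = (Dinv * L) * M := by rw [hDinvL]
      _ = Dinv * (L * M) := mul_assoc _ _ _
      _ = Dinv * (M * L) := by rw [hML]
      _ = (Dinv * M) * L := (mul_assoc _ _ _).symm
  have hz : (Dinv * (L * M)) ^ n = 0 := by
    have he : Dinv * (L * M) = L * (Dinv * M) := by
      rw [← mul_assoc, hDinvL, mul_assoc]
    rw [he, hcom.mul_pow, hL, D.mulVecLin_pow_n, zero_mul]
  have h1u : IsUnit (1 + Dinv * (L * M)) := IsNilpotent.isUnit_one_add ⟨n, hz⟩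
  have hd : IsUnit Dd := ⟨⟨Dd, Dinv, hDDinv, hDinvD⟩, rfl⟩
  have heq : D.jmap (gamA D q m u') + ε • D.jmap (sigS D m)
      = Dd * (1 + Dinv * (L * M)) := by
    rw [mul_add, mul_one, ← mul_assoc, hDDinv, one_mul, D.hmap_eq q m u' ε]
  rw [heq]
  exact hd.mul h1u

end Part3b

end JordanData
namespace JordanData

variable {k : Type*} [Field k] {n : ℕ} (D : JordanData k n)

section Part3c

variable (q m : ℕ) (u' : Fin n → k)

lemma gamA_lt_q {i : ℕ} (hi : i < q) (him : i < m) (hit : i < D.t) :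
    gamA D q m u' i = Pblk D u' i - D.X *ᵥ Pblk D u' i := by
  have ha := D.a_pos hit
  rw [gamA, del0, if_neg (Nat.ne_of_lt him), if_pos hi, ntil, if_pos hi, Matrix.mulVec_sub]
  have hXs : D.X *ᵥ (∑ j ∈ Finset.range (D.a i - 1), kap D u' i (j + 1) • ((D.X ^ j) *ᵥ D.v i))
      = ∑ j ∈ Finset.range (D.a i - 1), kap D u' i (j + 1) • ((D.X ^ (j + 1)) *ᵥ D.v i) := by
    rw [mulVec_sum']
    refine Finset.sum_congr rfl fun j _ => ?_
    rw [Matrix.mulVec_smul, Matrix.mulVec_mulVec, ← pow_succ']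
  have hP : Pblk D u' i
      = ∑ j ∈ Finset.range (D.a i - 1), kap D u' i (j + 1) • ((D.X ^ (j + 1)) *ᵥ D.v i)
        + kap D u' i 0 • D.v i := by
    have h2 := Finset.sum_range_succ' (fun j => kap D u' i j • ((D.X ^ j) *ᵥ D.v i)) (D.a i - 1)
    rw [Nat.sub_add_cancel ha] at h2
    rw [Pblk, h2, pow_zero, Matrix.one_mulVec]
  rw [hXs, hP]
  abel

lemma sum_V1 {i : ℕ} (hi : i < q) (him : i < m) (hit : i < D.t) :
    ∑ j ∈ Finset.Ico 1 (D.a i), (D.X ^ j) *ᵥ gamA D q m u' i = D.X *ᵥ Pblk D u' i := by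
  have h1 : ∀ j, (D.X ^ j) *ᵥ gamA D q m u' i
      = (D.X ^ j) *ᵥ Pblk D u' i - (D.X ^ (j + 1)) *ᵥ Pblk D u' i := by
    intro j
    rw [D.gamA_lt_q q m u' hi him hit, Matrix.mulVec_sub, Matrix.mulVec_mulVec, ← pow_succ]
  rw [Finset.sum_congr rfl fun j _ => h1 j,
    tel_Ico (fun j => (D.X ^ j) *ᵥ Pblk D u' i) (D.a_pos hit),
    D.kill_Pblk u' hit le_rfl, sub_zero, pow_one]

lemma gamA_mid {i : ℕ} (hiq : ¬ i < q) (hne : i ≠ m) : gamA D q m u' i = 0 := by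
  rw [gamA, del0, if_neg hne, if_neg hiq, zero_smul, zero_add, ntil, if_neg hiq, if_neg hne,
    Matrix.mulVec_zero]

lemma sum_V3 (hqm : q ≤ m) (hmt : m < D.t) (ham : D.a m = D.a q) :
    ∑ j ∈ Finset.range (D.a m), (D.X ^ j) *ᵥ gamA D q m u' m
      = D.v m + ∑ i ∈ Finset.Ico q D.t, D.X *ᵥ Pblk D u' i := by
  obtain ⟨Th, hTh⟩ : ∃ Th, Th = D.X *ᵥ Ttil D q m u' := ⟨_, rfl⟩
  have hgm : gamA D q m u' m = D.v m + (Th - D.X *ᵥ Th) := by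
    rw [gamA, del0, if_pos rfl, one_smul, ntil, if_neg (Nat.not_lt.mpr hqm), if_pos rfl,
      Matrix.mulVec_sub, ← hTh]
  have hsplit : ∀ j, (D.X ^ j) *ᵥ gamA D q m u' m
      = (D.X ^ j) *ᵥ D.v m + ((D.X ^ j) *ᵥ Th - (D.X ^ (j + 1)) *ᵥ Th) := by
    intro j
    rw [hgm, Matrix.mulVec_add, Matrix.mulVec_sub, Matrix.mulVec_mulVec, ← pow_succ]
  rw [Finset.sum_congr rfl fun j _ => hsplit j, Finset.sum_add_distrib,
    D.range_sum_eq (D.a_pos hmt) (D.v m)]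
  have hkill : (D.X ^ D.a m) *ᵥ Th = 0 := by
    rw [hTh, Matrix.mulVec_mulVec, ← pow_succ, pow_succ', ← Matrix.mulVec_mulVec,
      D.kill_Ttil q m u' (le_of_lt hmt) ham le_rfl, Matrix.mulVec_zero]
  have htel : ∑ j ∈ Finset.range (D.a m), ((D.X ^ j) *ᵥ Th - (D.X ^ (j + 1)) *ᵥ Th) = Th := by
    rw [Finset.sum_range_sub' (fun j => (D.X ^ j) *ᵥ Th) (D.a m), hkill, sub_zero, pow_zero,
      Matrix.one_mulVec]
  rw [htel]
  have hTh2 : Th = ∑ i ∈ Finset.Ico q D.t, D.X *ᵥ Pblk D u' i - D.X *ᵥ rtil D m := by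
    rw [hTh, Ttil, Matrix.mulVec_sub, mulVec_sum']
  have hr : ∑ j ∈ Finset.Ico 1 (D.a m), (D.X ^ j) *ᵥ D.v m = D.X *ᵥ rtil D m := by
    rw [rtil, D.mulVec_shift (D.v m) (D.a m)]
  rw [hTh2, hr]
  abel

lemma Aw_eq (hqm : q ≤ m) (hmt : m ≤ D.t) (ham : D.a m = D.a q)
    (w : Fin n → k) (hwm : m < D.t → w = D.v m) (hwt : m = D.t → q = D.t ∧ w = 0) :
    D.jmap (gamA D q m u') (hatW D q) = w + D.X *ᵥ u' := by
  have hqt : q ≤ D.t := hqm.trans hmt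
  have hkg := D.kill_gamA q m u' hmt ham
  have happ : D.jmap (gamA D q m u') (hatW D q)
      = ∑ i ∈ Finset.range q, ∑ j ∈ Finset.Ico 1 (D.a i), (D.X ^ j) *ᵥ gamA D q m u' i
        + ∑ i ∈ Finset.Ico q D.t, ∑ j ∈ Finset.range (D.a i),
            (D.X ^ j) *ᵥ gamA D q m u' i := by
    rw [hatW, map_add, map_sum, map_sum]
    congr 1
    · refine Finset.sum_congr rfl fun i hi => ?_
      rw [map_sum]
      exact Finset.sum_congr rfl fun j _ =>
        D.jmap_apply_pow _ hkg (lt_of_lt_of_le (Finset.mem_range.mp hi) hqt) j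
    · refine Finset.sum_congr rfl fun i hi => ?_
      rw [map_sum]
      exact Finset.sum_congr rfl fun j _ =>
        D.jmap_apply_pow _ hkg (Finset.mem_Ico.mp hi).2 j
  have hfirst : ∑ i ∈ Finset.range q, ∑ j ∈ Finset.Ico 1 (D.a i), (D.X ^ j) *ᵥ gamA D q m u' i
      = ∑ i ∈ Finset.range q, D.X *ᵥ Pblk D u' i := by
    refine Finset.sum_congr rfl fun i hi => ?_
    have hiq := Finset.mem_range.mp hi
    exact D.sum_V1 q m u' hiq (lt_of_lt_of_le hiq hqm) (lt_of_lt_of_le hiq hqt)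
  have hXu : D.X *ᵥ u' = ∑ i ∈ Finset.range q, D.X *ᵥ Pblk D u' i
      + ∑ i ∈ Finset.Ico q D.t, D.X *ᵥ Pblk D u' i := by
    conv_lhs => rw [← D.sum_Pblk u']
    rw [mulVec_sum', Finset.range_eq_Ico, ← Finset.sum_Ico_consecutive _ (Nat.zero_le q) hqt,
      ← Finset.range_eq_Ico]
  rcases lt_or_eq_of_le hmt with hmlt | hmeq
  · have hsecond : ∑ i ∈ Finset.Ico q D.t, ∑ j ∈ Finset.range (D.a i),
        (D.X ^ j) *ᵥ gamA D q m u' i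
        = D.v m + ∑ i ∈ Finset.Ico q D.t, D.X *ᵥ Pblk D u' i := by
      rw [Finset.sum_eq_single_of_mem m (Finset.mem_Ico.mpr ⟨hqm, hmlt⟩)
          (fun i hi hne => Finset.sum_eq_zero fun j _ => by
            rw [D.gamA_mid q m u' (Nat.not_lt.mpr (Finset.mem_Ico.mp hi).1) hne,
              Matrix.mulVec_zero]),
        D.sum_V3 q m u' hqm hmlt ham]
    rw [happ, hfirst, hsecond, hXu, hwm hmlt]
    abel
  · rcases hwt hmeq with ⟨hqeq, hw0⟩
    have hempty : Finset.Ico q D.t = ∅ := by rw [hqeq, Finset.Ico_self]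
    rw [happ, hfirst, hempty, Finset.sum_empty, add_zero, hXu, hempty, Finset.sum_empty,
      add_zero, hw0, zero_add]

end Part3c

end JordanData
namespace JordanData

variable {k : Type*} [Field k] {n : ℕ} (D : JordanData k n)

lemma subset_pairClosure (S : Set (Matrix (Fin n) (Fin n) k × (Fin n → k))) :
    S ⊆ pairClosure S := fun s hs f hf => hf s hs

lemma pairClosure_subset_of {S T : Set (Matrix (Fin n) (Fin n) k × (Fin n → k))}
    (h : S ⊆ pairClosure T) : pairClosure S ⊆ pairClosure T := by
  intro p hp f hf
  exact hp f (fun s hs => h hs f hf)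

lemma enh_subset_closure [IsAlgClosed k] (q m : ℕ) (hqm : q ≤ m) (hmt : m ≤ D.t)
    (ham : D.a m = D.a q) (w : Fin n → k) (hwm : m < D.t → w = D.v m)
    (hwt : m = D.t → q = D.t ∧ w = 0) :
    enhOrbit (D.X, w) ⊆ pairClosure
      { p : Matrix (Fin n) (Fin n) k × (Fin n → k) |
        ∃ g : (Matrix (Fin n) (Fin n) k)ˣ,
          p = (g.val * D.X * (g⁻¹).val, g.val *ᵥ hatW D q) } := by
  classical
  rintro y ⟨g, u, hy1, hy2⟩
  intro f hf
  obtain ⟨u', hu'⟩ : ∃ u', u' = -((g⁻¹).val *ᵥ u) := ⟨_, rfl⟩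
  obtain ⟨Aw, hAw⟩ : ∃ Aw, Aw = D.jmap (gamA D q m u') (hatW D q) := ⟨_, rfl⟩
  obtain ⟨Sw, hSw⟩ : ∃ Sw, Sw = D.jmap (sigS D m) (hatW D q) := ⟨_, rfl⟩
  obtain ⟨vc, hvc⟩ : ∃ vc : (Fin n × Fin n) ⊕ Fin n → Polynomial k,
      vc = Sum.elim (fun ij => Polynomial.C (y.1 ij.1 ij.2))
        (fun i => Polynomial.C ((g.val *ᵥ Aw) i)
          + Polynomial.X * Polynomial.C ((g.val *ᵥ Sw) i)) := ⟨_, rfl⟩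
  obtain ⟨Q, hQ⟩ : ∃ Q : Polynomial k, Q = MvPolynomial.eval₂ Polynomial.C vc f := ⟨_, rfl⟩
  have heval : ∀ ε : k,
      Polynomial.eval ε Q = MvPolynomial.eval (fun s => Polynomial.eval ε (vc s)) f := by
    intro ε
    have h1 : Polynomial.eval ε Q
        = (Polynomial.evalRingHom ε) (MvPolynomial.eval₂ Polynomial.C vc f) := by rw [hQ]; rfl
    rw [h1, MvPolynomial.eval₂_comp_left (Polynomial.evalRingHom ε) Polynomial.C vc f]
    have h2 : (Polynomial.evalRingHom ε).comp Polynomial.C = RingHom.id k :=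
      RingHom.ext fun x => Polynomial.eval_C
    rw [h2]
    rfl
  -- each good ε is a root of Q
  have hroot : ∀ ε : k, (∀ i < D.t, del D q m u' ε i ≠ 0) → Polynomial.eval ε Q = 0 := by
    intro ε hε
    obtain ⟨U, hU⟩ := D.hmap_isUnit q m u' ε hmt ham hε
    have h1 : (D.jmap (gamA D q m u') + ε • D.jmap (sigS D m)) * U.inv = 1 := by
      rw [← hU]; exact U.val_inv
    have h2 : U.inv * (D.jmap (gamA D q m u') + ε • D.jmap (sigS D m)) = 1 := by
      rw [← hU]; exact U.inv_val
    obtain ⟨Gm, hGm⟩ : ∃ Gm, Gm = matUnit _ U.inv h1 h2 := ⟨_, rfl⟩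
    have hGcomm : Gm.val * D.X = D.X * Gm.val := by
      rw [hGm]
      exact D.matUnit_comm _ U.inv h1 h2 (D.hmap_comm q m u' ε hmt ham)
    have hmem : ((g * Gm).val * D.X * ((g * Gm)⁻¹).val, (g * Gm).val *ᵥ hatW D q)
        ∈ { p : Matrix (Fin n) (Fin n) k × (Fin n → k) |
            ∃ g' : (Matrix (Fin n) (Fin n) k)ˣ,
              p = (g'.val * D.X * (g'⁻¹).val, g'.val *ᵥ hatW D q) } := ⟨g * Gm, rfl⟩
    have h0 := hf _ hmem
    rw [heval ε]
    have hcoord : (fun s => Polynomial.eval ε (vc s))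
        = pairCoords ((g * Gm).val * D.X * ((g * Gm)⁻¹).val, (g * Gm).val *ᵥ hatW D q) := by
      funext s
      rcases s with ij | i
      · simp only [hvc, Sum.elim_inl, Polynomial.eval_C, pairCoords]
        rw [D.conj_mul_eq g Gm hGcomm, hy1]
      · simp only [hvc, Sum.elim_inr, Polynomial.eval_add, Polynomial.eval_C,
          Polynomial.eval_mul, Polynomial.eval_X, pairCoords]
        have hGw : (g * Gm).val *ᵥ hatW D q = g.val *ᵥ (Aw + ε • Sw) := by
          rw [Units.val_mul, ← Matrix.mulVec_mulVec, hGm,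
            matUnit_mulVec _ U.inv h1 h2 (hatW D q), LinearMap.add_apply,
            LinearMap.smul_apply, hAw, hSw]
        rw [hGw, Matrix.mulVec_add, Matrix.mulVec_smul]
        simp [smul_eq_mul]
    rw [hcoord]
    exact h0
  -- Q vanishes on a cofinite set, hence is zero
  obtain ⟨badf, hbadf⟩ : ∃ badf : Finset k,
      badf = (Finset.range D.t).image (fun i => -del0 D q m u' i) := ⟨_, rfl⟩
  have hgood : ∀ ε : k, ε ∉ badf → ∀ i < D.t, del D q m u' ε i ≠ 0 := by
    intro ε hε i hi
    rcases eq_or_ne i m with rfl | hne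
    · rw [del, if_pos rfl, mul_zero, add_zero, del0, if_pos rfl]
      exact one_ne_zero
    · rw [del, if_neg hne, mul_one]
      intro hc
      refine hε ?_
      rw [hbadf]
      refine Finset.mem_image.mpr ⟨i, Finset.mem_range.mpr hi, ?_⟩
      exact neg_eq_of_add_eq_zero_right hc
  have hQ0 : Q = 0 := by
    refine Polynomial.eq_zero_of_infinite_isRoot Q ?_
    refine Set.Infinite.mono ?_ (badf.finite_toSet.infinite_compl)
    intro ε hε
    exact hroot ε (hgood ε hε)
  -- conclude at ε = 0
  have hy2' : y.2 = g.val *ᵥ Aw := by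
    rw [hAw, D.Aw_eq q m u' hqm hmt ham w hwm hwt, hy2, Matrix.mulVec_add]
    have hterm : -((g.val * D.X * (g⁻¹).val) *ᵥ u) = g.val *ᵥ (D.X *ᵥ u') := by
      rw [hu', Matrix.mulVec_neg, Matrix.mulVec_neg, ← Matrix.mulVec_mulVec,
        ← Matrix.mulVec_mulVec]
    rw [hterm, add_comm]
  have hfinal : pairCoords y = fun s => Polynomial.eval 0 (vc s) := by
    funext s
    rcases s with ij | i
    · simp [hvc, pairCoords]
    · simp [hvc, pairCoords, hy2']
  rw [hfinal, ← heval 0, hQ0, Polynomial.eval_zero]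

end JordanData
/-- The Zariski closure in `glₙ(k) × kⁿ` of the `Ad(Ḡ)`-orbit of the
standard representative `(J_λ, w_q)` equals the Zariski closure of the `GLₙ(k)`-orbit
`{(g J_λ g⁻¹, g ŵ) : g ∈ GLₙ(k)}` of `(J_λ, ŵ)`. -/
theorem enhOrbit_closure_eq_G_orbit_closure
    {k : Type*} [Field k] [IsAlgClosed k] {n : ℕ} (hn : 1 ≤ n)
    (D : JordanData k n) (q : ℕ) (hq : D.Admissible q)
    (w : Fin n → k) (hw : D.StdVec q w) :
    pairClosure (enhOrbit (D.X, w))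
      = pairClosure { p : Matrix (Fin n) (Fin n) k × (Fin n → k) |
          ∃ g : (Matrix (Fin n) (Fin n) k)ˣ,
            p = (g.val * D.X * (g⁻¹).val, g.val *ᵥ hatW D q) } := by
  obtain ⟨m, hqm, hmt, ham, hwm, hwt⟩ :
      ∃ m, q ≤ m ∧ m ≤ D.t ∧ D.a m = D.a q ∧ (m < D.t → w = D.v m)
        ∧ (m = D.t → q = D.t ∧ w = 0) := by
    rcases hw with ⟨hqt, hw0⟩ | ⟨hqt, m, hmt, ham, _hmax, hwv⟩
    · exact ⟨D.t, le_of_eq hqt, le_rfl, by rw [hqt],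
        fun h => absurd h (lt_irrefl _), fun _ => ⟨hqt, hw0⟩⟩
    · refine ⟨m, ?_, le_of_lt hmt, ham, fun _ => hwv,
        fun h => absurd (h ▸ hmt) (lt_irrefl _)⟩
      by_contra hlt
      push_neg at hlt
      rcases hq with hqt' | ⟨_, hstrict⟩
      · omega
      · have := hstrict m hlt
        omega
  apply Set.Subset.antisymm
  · exact JordanData.pairClosure_subset_of
      (D.enh_subset_closure q m hqm hmt ham w hwm hwt)
  · exact JordanData.pairClosure_subset_of
      ((D.orb_subset_enhOrbit q m w hqm hmt ham hwm hwt).trans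
        (JordanData.subset_pairClosure _))
end
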